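/- arXiv:2003.12977 — 9 statements merged into one kernel-verified Lean document; each statement's English description precedes it below -/
import Mathlib

section
/- Let X be a quandle and D(X) its symmetric double, and let ≈ denote the equivalence relation defining the tensor product on pairs. For all x₁, x₂, y₁, y₂ ∈ X and signs ε₁, ε₂, δ₁, δ₂ ∈ {+,−}, the pairs (x₁^{ε₁}, x₂^{ε₂}) and (y₁^{δ₁}, y₂^{δ₂}) represent the same element of D(X) ⊗ D(X) if and only if ε₁ = δ₁, ε₂ = δ₂, and (x₁, x₂), (y₁, y₂) represent the same element of X ⊗ X. Consequently, the elements of D(X) ⊗ D(X) are exactly the sets E^{ε,δ} = {(x^ε, y^δ) : (x, y) ∈ E} for E ∈ X ⊗ X and ε, δ ∈ {+,−}. -/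
/-- A quandle: a set with two binary operations `op` (`∗`) and `inv` (`∗̄`)
satisfying (Q1), (Q2), (Q3). -/
structure QuandleStr (X : Type) where
  op : X → X → X
  inv : X → X → X
  q1 : ∀ x, op x x = x
  q2a : ∀ x y, inv (op x y) y = x
  q2b : ∀ x y, op (inv x y) y = x
  q3 : ∀ x y z, op (op x y) z = op (op x z) (op y z)

namespace QuandleStr

variable {X Y : Type} (Q : QuandleStr X)

lemma inv_self (x : X) : Q.inv x x = x := by
  have h := Q.q2a x x
  rwa [Q.q1] at h

lemma op_right_cancel {a b : X} (z : X) (h : Q.op a z = Q.op b z) : a = b := by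
  have h2 := congrArg (fun t => Q.inv t z) h
  simpa [Q.q2a] using h2

lemma distA (x y z : X) : Q.inv (Q.op x y) z = Q.op (Q.inv x z) (Q.inv y z) := by
  apply Q.op_right_cancel z
  rw [Q.q2b, Q.q3, Q.q2b, Q.q2b]

lemma distB (x y z : X) : Q.op (Q.inv x y) z = Q.inv (Q.op x z) (Q.op y z) := by
  have h : Q.op (Q.op (Q.inv x y) y) z = Q.op (Q.op (Q.inv x y) z) (Q.op y z) := Q.q3 _ _ _
  rw [Q.q2b] at h
  have h2 := congrArg (fun t => Q.inv t (Q.op y z)) h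
  simpa [Q.q2a] using h2.symm

lemma distD (x y z : X) : Q.inv (Q.inv x y) z = Q.inv (Q.inv x z) (Q.inv y z) := by
  apply Q.op_right_cancel z
  rw [Q.q2b, Q.distB, Q.q2b, Q.q2b]

/-- One step of the relation generating the tensor product:
`(x₁, x₂) ≈ (x₁ ∗ z, x₂ ∗ z)`. -/
def tensorStep (p q : X × X) : Prop :=
  ∃ z, q = (Q.op p.1 z, Q.op p.2 z)

/-- The equivalence relation `≈` defining the tensor product `X ⊗ X`:
the equivalence relation generated by `(x₁, x₂) ≈ (x₁ ∗ z, x₂ ∗ z)`. -/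
def tensorEqv : X × X → X × X → Prop :=
  Relation.EqvGen Q.tensorStep

/-- The tensor product `X ⊗ X` of a quandle. -/
def Tensor : Type :=
  Quotient (Relation.EqvGen.setoid Q.tensorStep)

/-- The symmetric double `D(X)` of a quandle, realized on `X × Bool`
(`(x, true)` is `x⁺` and `(x, false)` is `x⁻`), with
`x^ε ∗ y⁺ = (x∗y)^ε`, `x^ε ∗ y⁻ = (x∗̄y)^ε`, `x^ε ∗̄ y⁺ = (x∗̄y)^ε`,
`x^ε ∗̄ y⁻ = (x∗y)^ε`. -/
def double : QuandleStr (X × Bool) where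
  op a b := (if b.2 then Q.op a.1 b.1 else Q.inv a.1 b.1, a.2)
  inv a b := (if b.2 then Q.inv a.1 b.1 else Q.op a.1 b.1, a.2)
  q1 := by rintro ⟨x, ε⟩; cases ε <;> simp [Q.q1, Q.inv_self]
  q2a := by rintro ⟨x, ε⟩ ⟨y, δ⟩; cases δ <;> simp [Q.q2a, Q.q2b]
  q2b := by rintro ⟨x, ε⟩ ⟨y, δ⟩; cases δ <;> simp [Q.q2a, Q.q2b]
  q3 := by
    rintro ⟨x, ε⟩ ⟨y, δ⟩ ⟨z, γ⟩
    cases δ <;> cases γ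
    · show (Q.inv (Q.inv x y) z, ε) = (Q.inv (Q.inv x z) (Q.inv y z), ε)
      rw [Q.distD]
    · show (Q.op (Q.inv x y) z, ε) = (Q.inv (Q.op x z) (Q.op y z), ε)
      rw [Q.distB]
    · show (Q.inv (Q.op x y) z, ε) = (Q.op (Q.inv x z) (Q.inv y z), ε)
      rw [Q.distA]
    · show (Q.op (Q.op x y) z, ε) = (Q.op (Q.op x z) (Q.op y z), ε)
      rw [Q.q3]

/-- The equivalence relation generated by `≈` and the swap `τ`. -/
def tensorTauEqv : X × X → X × X → Prop :=
  Relation.EqvGen (fun p q => Q.tensorStep p q ∨ q = p.swap)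

/-- The quotient `X ⊗ X / ⟨τ⟩`. -/
def TensorTau : Type :=
  Quotient (Relation.EqvGen.setoid (fun p q => Q.tensorStep p q ∨ q = p.swap))

/-- The equivalence relation generated by `≈` and `(x₁, x₂) ↦ (ρ(x₁), ρ(x₂))`
for an involution `r` of `X`. -/
def tensorRhoEqv (r : X → X) : X × X → X × X → Prop :=
  Relation.EqvGen (fun p q => Q.tensorStep p q ∨ q = (r p.1, r p.2))

/-- The quotient `X ⊗ X / ⟨ρ⟩`. -/
def TensorRho (r : X → X) : Type :=
  Quotient (Relation.EqvGen.setoid (fun p q => Q.tensorStep p q ∨ q = (r p.1, r p.2)))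

/-- The equivalence relation generated by `≈`, `τ` and `ρ`. -/
def tensorTauRhoEqv (r : X → X) : X × X → X × X → Prop :=
  Relation.EqvGen (fun p q => Q.tensorStep p q ∨ q = p.swap ∨ q = (r p.1, r p.2))

/-- The quotient `X ⊗ X / ⟨τ, ρ⟩`. -/
def TensorTauRho (r : X → X) : Type :=
  Quotient (Relation.EqvGen.setoid
    (fun p q => Q.tensorStep p q ∨ q = p.swap ∨ q = (r p.1, r p.2)))

end QuandleStr

/-- The good involution `ρ` on the symmetric double `D(X) = X × Bool`,
exchanging `x⁺` and `x⁻`. -/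
def doubleRho {X : Type} : X × Bool → X × Bool := fun a => (a.1, !a.2)

lemma double_fwd {X : Type} (Q : QuandleStr X) {p q : (X × Bool) × (X × Bool)}
    (h : (Q.double).tensorEqv p q) :
    p.1.2 = q.1.2 ∧ p.2.2 = q.2.2 ∧ Q.tensorEqv (p.1.1, p.2.1) (q.1.1, q.2.1) := by
  induction h with
  | rel a b hab =>
    obtain ⟨⟨z, γ⟩, hz⟩ := hab
    subst hz
    cases γ
    · exact ⟨rfl, rfl, Relation.EqvGen.symm _ _
        (Relation.EqvGen.rel _ _ ⟨z, by simp [QuandleStr.double, Q.q2b]⟩)⟩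
    · exact ⟨rfl, rfl, Relation.EqvGen.rel _ _ ⟨z, rfl⟩⟩
  | refl a => exact ⟨rfl, rfl, Relation.EqvGen.refl _⟩
  | symm a b _ ih =>
    exact ⟨ih.1.symm, ih.2.1.symm, Relation.EqvGen.symm _ _ ih.2.2⟩
  | trans a b c _ _ ih1 ih2 =>
    exact ⟨ih1.1.trans ih2.1, ih1.2.1.trans ih2.2.1,
      Relation.EqvGen.trans _ _ _ ih1.2.2 ih2.2.2⟩

lemma double_bwd {X : Type} (Q : QuandleStr X) (ε δ : Bool) {a b : X × X}
    (h : Q.tensorEqv a b) :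
    (Q.double).tensorEqv ((a.1, ε), (a.2, δ)) ((b.1, ε), (b.2, δ)) := by
  induction h with
  | rel a b hab =>
    obtain ⟨z, hz⟩ := hab
    subst hz
    exact Relation.EqvGen.rel _ _ ⟨(z, true), by simp [QuandleStr.double]⟩
  | refl a => exact Relation.EqvGen.refl _
  | symm a b _ ih => exact Relation.EqvGen.symm _ _ ih
  | trans a b c _ _ ih1 ih2 => exact Relation.EqvGen.trans _ _ _ ih1 ih2

/-- pairs `(x₁^{ε₁}, x₂^{ε₂})` and `(y₁^{δ₁}, y₂^{δ₂})` represent the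
same element of `D(X) ⊗ D(X)` iff `ε₁ = δ₁`, `ε₂ = δ₂` and `(x₁, x₂) ≈ (y₁, y₂)` in
`X × X`; consequently the elements of `D(X) ⊗ D(X)` are exactly the sets
`E^{ε,δ} = {(x^ε, y^δ) : (x, y) ∈ E}` for `E ∈ X ⊗ X` and `ε, δ`. -/
theorem statement0 {X : Type} (Q : QuandleStr X) :
    (∀ (x₁ x₂ y₁ y₂ : X) (ε₁ ε₂ δ₁ δ₂ : Bool),
      (Q.double).tensorEqv ((x₁, ε₁), (x₂, ε₂)) ((y₁, δ₁), (y₂, δ₂)) ↔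
        ε₁ = δ₁ ∧ ε₂ = δ₂ ∧ Q.tensorEqv (x₁, x₂) (y₁, y₂)) ∧
    ({S : Set ((X × Bool) × (X × Bool)) |
        ∃ p, S = {q | (Q.double).tensorEqv p q}} =
      {S | ∃ (E : Set (X × X)) (ε δ : Bool),
        (∃ p₀, E = {q | Q.tensorEqv p₀ q}) ∧
        S = {q | ∃ x y, (x, y) ∈ E ∧ q = ((x, ε), (y, δ))}}) := by
  have key : ∀ (x₁ x₂ y₁ y₂ : X) (ε₁ ε₂ δ₁ δ₂ : Bool),
      (Q.double).tensorEqv ((x₁, ε₁), (x₂, ε₂)) ((y₁, δ₁), (y₂, δ₂)) ↔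
        ε₁ = δ₁ ∧ ε₂ = δ₂ ∧ Q.tensorEqv (x₁, x₂) (y₁, y₂) := by
    intro x₁ x₂ y₁ y₂ ε₁ ε₂ δ₁ δ₂
    constructor
    · intro h; exact double_fwd Q h
    · rintro ⟨rfl, rfl, h⟩; exact double_bwd Q ε₁ ε₂ h
  refine ⟨key, ?_⟩
  ext S
  constructor
  · rintro ⟨⟨⟨x₁, ε₁⟩, ⟨x₂, ε₂⟩⟩, rfl⟩
    refine ⟨{q | Q.tensorEqv (x₁, x₂) q}, ε₁, ε₂, ⟨(x₁, x₂), rfl⟩, ?_⟩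
    ext ⟨⟨y₁, δ₁⟩, ⟨y₂, δ₂⟩⟩
    simp only [Set.mem_setOf_eq, key, Prod.mk.injEq]
    constructor
    · rintro ⟨rfl, rfl, h⟩; exact ⟨y₁, y₂, h, ⟨rfl, rfl⟩, ⟨rfl, rfl⟩⟩
    · rintro ⟨x, y, h, ⟨rfl, rfl⟩, ⟨rfl, rfl⟩⟩
      exact ⟨rfl, rfl, h⟩
  · rintro ⟨E, ε, δ, ⟨⟨x₁, x₂⟩, rfl⟩, rfl⟩
    refine ⟨((x₁, ε), (x₂, δ)), ?_⟩
    ext ⟨⟨y₁, δ₁⟩, ⟨y₂, δ₂⟩⟩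
    simp only [Set.mem_setOf_eq, key, Prod.mk.injEq]
    constructor
    · rintro ⟨x, y, h, ⟨rfl, rfl⟩, ⟨rfl, rfl⟩⟩
      exact ⟨rfl, rfl, h⟩
    · rintro ⟨rfl, rfl, h⟩; exact ⟨y₁, y₂, h, ⟨rfl, rfl⟩, ⟨rfl, rfl⟩⟩
end

section
/- Let X be a quandle, let (x₀, y₀) ∈ X × X, and let E ⊆ X × X be the equivalence class of (x₀, y₀) under the relation ≈ defining X ⊗ X. Then for any ε, δ ∈ {+,−}, the equivalence class of (x₀^ε, y₀^δ) in D(X) × D(X) under the relation defining D(X) ⊗ D(X) equals E^{ε,δ} = {(x^ε, y^δ) : (x, y) ∈ E}. -/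
/-! A generating step of `≈` on `D(X)` never changes the signs, and after forgetting them it is
a step of `≈` on `X`: by `z⁺` it acts as `∗ z`, by `z⁻` as `∗̄ z`, which is the inverse of the
step by `z`. Conversely the steps by `z⁺` reproduce `≈` on each sign sector `X^ε × X^δ`. -/

namespace QuandleStr

variable {X : Type} (Q : QuandleStr X)

lemma tensorStep_inv (p : X × X) (z : X) : Q.tensorStep (Q.inv p.1 z, Q.inv p.2 z) p :=
  ⟨z, by simp only [Q.q2b]⟩

lemma signs_eq_of_double_tensorEqv {p q : (X × Bool) × (X × Bool)}
    (h : Q.double.tensorEqv p q) : p.1.2 = q.1.2 ∧ p.2.2 = q.2.2 := by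
  refine Prod.ext_iff.mp (Setoid.eqvGen_le
    (s := Setoid.ker fun p : (X × Bool) × (X × Bool) => (p.1.2, p.2.2)) ?_ h)
  rintro p _ ⟨z, rfl⟩
  rfl

lemma tensorEqv_of_double_tensorEqv {p q : (X × Bool) × (X × Bool)}
    (h : Q.double.tensorEqv p q) : Q.tensorEqv (p.1.1, p.2.1) (q.1.1, q.2.1) := by
  refine Setoid.eqvGen_le
    (s := Setoid.comap (fun p : (X × Bool) × (X × Bool) => (p.1.1, p.2.1))
      (Relation.EqvGen.setoid Q.tensorStep)) ?_ h
  rintro p _ ⟨⟨z, γ⟩, rfl⟩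
  cases γ
  · exact .symm _ _ (.rel _ _ (Q.tensorStep_inv (p.1.1, p.2.1) z))
  · exact .rel _ _ ⟨z, rfl⟩

lemma double_tensorEqv_of_tensorEqv (ε δ : Bool) {p q : X × X} (h : Q.tensorEqv p q) :
    Q.double.tensorEqv ((p.1, ε), (p.2, δ)) ((q.1, ε), (q.2, δ)) := by
  refine Setoid.eqvGen_le
    (s := Setoid.comap (fun p : X × X => ((p.1, ε), (p.2, δ)))
      (Relation.EqvGen.setoid Q.double.tensorStep)) ?_ h
  rintro p _ ⟨z, rfl⟩
  exact .rel _ _ ⟨(z, true), rfl⟩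

end QuandleStr

/-- if `E` is the `≈`-equivalence class of `(x₀, y₀)` in `X × X`, then
for any `ε, δ` the equivalence class of `(x₀^ε, y₀^δ)` in `D(X) × D(X)` equals
`E^{ε,δ} = {(x^ε, y^δ) : (x, y) ∈ E}`. -/
theorem statement2 {X : Type} (Q : QuandleStr X) (x₀ y₀ : X) (ε δ : Bool) :
    {q | (Q.double).tensorEqv ((x₀, ε), (y₀, δ)) q} =
      {q | ∃ x y, (x, y) ∈ {p : X × X | Q.tensorEqv (x₀, y₀) p} ∧
        q = ((x, ε), (y, δ))} := by
  ext q
  constructor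
  · intro h
    obtain ⟨hε, hδ⟩ := Q.signs_eq_of_double_tensorEqv h
    exact ⟨q.1.1, q.2.1, Q.tensorEqv_of_double_tensorEqv h,
      Prod.ext (Prod.ext rfl hε.symm) (Prod.ext rfl hδ.symm)⟩
  · rintro ⟨x, y, hxy, rfl⟩
    exact Q.double_tensorEqv_of_tensorEqv ε δ hxy
end

section
/- Let n = 2m+1 and let R_n be the dihedral quandle of order n. Two pairs (x, y), (x', y') ∈ R_n × R_n are equivalent under the relation ≈ defining R_n ⊗ R_n if and only if d_n(x, y) = d_n(x', y'). Consequently, the equivalence classes are exactly the sets E(k) = {(i, i+k), (i, i−k) : i ∈ ℤ/nℤ} for k = 0, 1, …, m, and R_n ⊗ R_n has exactly m+1 elements. -/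
/-- The dihedral quandle `R_n` of order `n`: `ℤ/nℤ` with `x ∗ y = x ∗̄ y = 2y − x`. -/
def dihedral (n : ℕ) : QuandleStr (ZMod n) where
  op x y := 2 * y - x
  inv x y := 2 * y - x
  q1 := by intro x; ring
  q2a := by intro x y; ring
  q2b := by intro x y; ring
  q3 := by intro x y z; ring

/-- The distance `d_n` on `ℤ/nℤ`:
`d_n(x, y) = min {|a − b| : a, b ∈ ℤ, a ≡ x, b ≡ y (mod n)}`. -/
noncomputable def ddist (n : ℕ) (x y : ZMod n) : ℕ :=
  sInf {d : ℕ | ∃ a b : ℤ, (a : ZMod n) = x ∧ (b : ZMod n) = y ∧ (a - b).natAbs = d}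

/-- `x ∈ ℤ/nℤ` is represented by an even integer. -/
def isEvenClass (n : ℕ) (x : ZMod n) : Prop :=
  ∃ a : ℤ, Even a ∧ (a : ZMod n) = x

/-- `x ∈ ℤ/nℤ` is represented by an odd integer. -/
def isOddClass (n : ℕ) (x : ZMod n) : Prop :=
  ∃ a : ℤ, Odd a ∧ (a : ZMod n) = x

/-- `E(k) = {(i, i+k), (i, i−k) : i ∈ ℤ/nℤ}`. -/
def Eset (n k : ℕ) : Set (ZMod n × ZMod n) :=
  {p | ∃ i : ZMod n, p = (i, i + (k : ZMod n)) ∨ p = (i, i - (k : ZMod n))}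


section Statement3Aux

lemma ddist_eq_valMinAbs (n : ℕ) [NeZero n] (x y : ZMod n) :
    ddist n x y = (x - y).valMinAbs.natAbs := by
  unfold ddist
  have hmem : (x - y).valMinAbs.natAbs ∈
      {d : ℕ | ∃ a b : ℤ, (a : ZMod n) = x ∧ (b : ZMod n) = y ∧ (a - b).natAbs = d} := by
    refine ⟨(x - y).valMinAbs + (y.val : ℤ), (y.val : ℤ), ?_, ?_, by ring_nf⟩
    · push_cast
      rw [ZMod.natCast_val, ZMod.cast_id]
      ring
    · push_cast
      rw [ZMod.natCast_val, ZMod.cast_id]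
  refine le_antisymm (Nat.sInf_le hmem) ?_
  obtain ⟨a, b, ha, hb, hd⟩ := Nat.sInf_mem (⟨_, hmem⟩ : Set.Nonempty _)
  rw [← hd]
  apply ZMod.natAbs_min_of_le_div_two n
  · push_cast
    rw [ha, hb]
  · exact ZMod.natAbs_valMinAbs_le _

lemma valMinAbs_natAbs_eq_iff' {n : ℕ} (d e : ZMod n) :
    d.valMinAbs.natAbs = e.valMinAbs.natAbs ↔ d = e ∨ d = -e := by
  constructor
  · intro h
    rcases Int.natAbs_eq_natAbs_iff.1 h with h | h
    · left; rw [← ZMod.coe_valMinAbs d, ← ZMod.coe_valMinAbs e, h]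
    · right; rw [← ZMod.coe_valMinAbs d, ← ZMod.coe_valMinAbs e, h]; push_cast; ring
  · rintro (rfl | rfl)
    · rfl
    · exact ZMod.natAbs_valMinAbs_neg e

lemma dihedral_forward (m : ℕ) (p q : ZMod (2 * m + 1) × ZMod (2 * m + 1))
    (h : (dihedral (2 * m + 1)).tensorEqv p q) :
    q.2 - q.1 = p.2 - p.1 ∨ q.2 - q.1 = -(p.2 - p.1) := by
  induction h with
  | rel p q hs =>
    obtain ⟨z, hz⟩ := hs
    subst hz
    right
    show (2 * z - p.2) - (2 * z - p.1) = -(p.2 - p.1)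
    ring
  | refl p => left; rfl
  | symm p q _ ih =>
    rcases ih with h | h
    · left; linear_combination -h
    · right; linear_combination h
  | trans p q r _ _ ih1 ih2 =>
    rcases ih1 with h1 | h1 <;> rcases ih2 with h2 | h2
    · left; linear_combination h1 + h2
    · right; linear_combination h2 - h1
    · right; linear_combination h2 + h1
    · left; linear_combination h2 - h1

lemma dihedral_two_mul (m : ℕ) :
    (2 : ZMod (2 * m + 1)) * ((m : ZMod (2 * m + 1)) + 1) = 1 := by
  have hn : ((2 * m + 1 : ℕ) : ZMod (2 * m + 1)) = 0 := ZMod.natCast_self _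
  push_cast at hn
  linear_combination hn

lemma dihedral_backward_neg (m : ℕ) (a b a' b' : ZMod (2 * m + 1))
    (hd : b' - a' = -(b - a)) :
    (dihedral (2 * m + 1)).tensorEqv (a, b) (a', b') := by
  apply Relation.EqvGen.rel
  refine ⟨((m : ZMod (2 * m + 1)) + 1) * (a + a'), ?_⟩
  have e1 : 2 * (((m : ZMod (2 * m + 1)) + 1) * (a + a')) = a + a' := by
    linear_combination (a + a') * dihedral_two_mul m
  show (a', b') = (2 * (((m : ZMod (2 * m + 1)) + 1) * (a + a')) - a,
      2 * (((m : ZMod (2 * m + 1)) + 1) * (a + a')) - b)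
  refine Prod.ext ?_ ?_
  · show a' = 2 * (((m : ZMod (2 * m + 1)) + 1) * (a + a')) - a
    linear_combination -e1
  · show b' = 2 * (((m : ZMod (2 * m + 1)) + 1) * (a + a')) - b
    linear_combination hd - e1

lemma dihedral_backward (m : ℕ) (a b a' b' : ZMod (2 * m + 1))
    (hd : b' - a' = b - a ∨ b' - a' = -(b - a)) :
    (dihedral (2 * m + 1)).tensorEqv (a, b) (a', b') := by
  rcases hd with hd | hd
  · refine Relation.EqvGen.trans _ (-a, -b) _ ?_ ?_
    · apply Relation.EqvGen.rel
      refine ⟨0, ?_⟩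
      show (-a, -b) = (2 * 0 - a, 2 * 0 - b)
      refine Prod.ext ?_ ?_ <;> show _ = (2 : ZMod (2 * m + 1)) * 0 - _ <;> ring
    · exact dihedral_backward_neg m (-a) (-b) a' b' (by linear_combination hd)
  · exact dihedral_backward_neg m a b a' b' hd

lemma dihedral_tensorEqv_iff (m : ℕ) (x y x' y' : ZMod (2 * m + 1)) :
    (dihedral (2 * m + 1)).tensorEqv (x, y) (x', y') ↔
      (y' - x' = y - x ∨ y' - x' = -(y - x)) :=
  ⟨fun h => dihedral_forward m _ _ h, fun h => dihedral_backward m x y x' y' h⟩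

lemma Eset_mem_iff (n k : ℕ) (q : ZMod n × ZMod n) :
    q ∈ Eset n k ↔ (q.2 - q.1 = (k : ZMod n) ∨ q.2 - q.1 = -(k : ZMod n)) := by
  constructor
  · rintro ⟨i, h | h⟩ <;> subst h
    · left; ring
    · right; ring
  · rintro (h | h)
    · exact ⟨q.1, Or.inl (Prod.ext rfl (by linear_combination h))⟩
    · exact ⟨q.1, Or.inr (Prod.ext rfl (by linear_combination h))⟩

end Statement3Aux

/-- for `n = 2m+1`, two pairs are `≈`-equivalent iff they have the same
distance; the classes are exactly the `E(k)` for `k = 0, …, m`, and `R_n ⊗ R_n` has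
exactly `m+1` elements. -/
theorem statement3 (m : ℕ) :
    (∀ x y x' y' : ZMod (2 * m + 1),
      (dihedral (2 * m + 1)).tensorEqv (x, y) (x', y') ↔
        ddist (2 * m + 1) x y = ddist (2 * m + 1) x' y') ∧
    ({S : Set (ZMod (2 * m + 1) × ZMod (2 * m + 1)) |
        ∃ p, S = {q | (dihedral (2 * m + 1)).tensorEqv p q}} =
      {S | ∃ k ≤ m, S = Eset (2 * m + 1) k}) ∧
    Nat.card ((dihedral (2 * m + 1)).Tensor) = m + 1 := by
  haveI : NeZero (2 * m + 1) := ⟨by omega⟩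
  have hdiv : (2 * m + 1) / 2 = m := by omega
  have hfk : ∀ k : ℕ, k ≤ m → ((k : ZMod (2 * m + 1))).valMinAbs.natAbs = k := by
    intro k hk
    rw [ZMod.valMinAbs_natCast_of_le_half (by omega : k ≤ (2 * m + 1) / 2)]
    exact Int.natAbs_natCast k
  have hfle : ∀ d : ZMod (2 * m + 1), d.valMinAbs.natAbs ≤ m := fun d => by
    have := ZMod.natAbs_valMinAbs_le d; omega
  have part1 : ∀ x y x' y' : ZMod (2 * m + 1),
      (dihedral (2 * m + 1)).tensorEqv (x, y) (x', y') ↔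
        ddist (2 * m + 1) x y = ddist (2 * m + 1) x' y' := by
    intro x y x' y'
    rw [dihedral_tensorEqv_iff, ddist_eq_valMinAbs, ddist_eq_valMinAbs]
    rw [show x - y = -(y - x) by ring, show x' - y' = -(y' - x') by ring,
      ZMod.natAbs_valMinAbs_neg, ZMod.natAbs_valMinAbs_neg, valMinAbs_natAbs_eq_iff']
    constructor <;> rintro (h | h)
    · left; linear_combination -h
    · right; linear_combination h
    · left; linear_combination -h
    · right; linear_combination h
  have classEq : ∀ p : ZMod (2 * m + 1) × ZMod (2 * m + 1),
      {q | (dihedral (2 * m + 1)).tensorEqv p q} =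
        Eset (2 * m + 1) ((p.2 - p.1).valMinAbs.natAbs) := by
    intro p
    set k := (p.2 - p.1).valMinAbs.natAbs with hkdef
    have hd : p.2 - p.1 = (k : ZMod (2 * m + 1)) ∨
        p.2 - p.1 = -((k : ZMod (2 * m + 1))) := by
      apply (valMinAbs_natAbs_eq_iff' _ _).1
      rw [hfk k (hfle _)]
    ext q
    have hiff : (dihedral (2 * m + 1)).tensorEqv p q ↔
        (q.2 - q.1 = p.2 - p.1 ∨ q.2 - q.1 = -(p.2 - p.1)) :=
      ⟨fun h => dihedral_forward m p q h,
       fun h => dihedral_backward m p.1 p.2 q.1 q.2 h⟩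
    rw [Set.mem_setOf_eq, Eset_mem_iff, hiff]
    rcases hd with h | h <;> rw [h] <;> simp only [neg_neg] <;> tauto
  refine ⟨part1, ?_, ?_⟩
  · ext S
    simp only [Set.mem_setOf_eq]
    constructor
    · rintro ⟨p, rfl⟩
      exact ⟨(p.2 - p.1).valMinAbs.natAbs, hfle _, classEq p⟩
    · rintro ⟨k, hk, rfl⟩
      refine ⟨(0, (k : ZMod (2 * m + 1))), ?_⟩
      rw [classEq]
      simp only [sub_zero]
      rw [hfk k hk]
  · have hwd : ∀ p q : ZMod (2 * m + 1) × ZMod (2 * m + 1),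
        Relation.EqvGen ((dihedral (2 * m + 1)).tensorStep) p q →
          ((⟨(p.2 - p.1).valMinAbs.natAbs, Nat.lt_succ_of_le (hfle _)⟩ : Fin (m + 1)) =
            ⟨(q.2 - q.1).valMinAbs.natAbs, Nat.lt_succ_of_le (hfle _)⟩) := by
      intro p q h
      apply Fin.ext
      show (p.2 - p.1).valMinAbs.natAbs = (q.2 - q.1).valMinAbs.natAbs
      rw [valMinAbs_natAbs_eq_iff']
      rcases dihedral_forward m p q h with h' | h'
      · left; linear_combination -h'
      · right; linear_combination h'
    let g : (dihedral (2 * m + 1)).Tensor → Fin (m + 1) :=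
      Quotient.lift
        (fun p => (⟨(p.2 - p.1).valMinAbs.natAbs, Nat.lt_succ_of_le (hfle _)⟩ : Fin (m + 1)))
        hwd
    have hbij : Function.Bijective g := by
      constructor
      · intro a b
        induction a using Quotient.inductionOn with | h p =>
        induction b using Quotient.inductionOn with | h q =>
        intro h
        have hval : (p.2 - p.1).valMinAbs.natAbs = (q.2 - q.1).valMinAbs.natAbs :=
          congrArg Fin.val h
        apply Quotient.sound
        show Relation.EqvGen ((dihedral (2 * m + 1)).tensorStep) p q
        rcases (valMinAbs_natAbs_eq_iff' _ _).1 hval with h' | h'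
        · exact dihedral_backward m p.1 p.2 q.1 q.2 (Or.inl (by linear_combination -h'))
        · exact dihedral_backward m p.1 p.2 q.1 q.2 (Or.inr (by linear_combination h'))
      · rintro ⟨k, hk⟩
        refine ⟨Quotient.mk _ (0, (k : ZMod (2 * m + 1))), ?_⟩
        apply Fin.ext
        show ((k : ZMod (2 * m + 1)) - 0).valMinAbs.natAbs = k
        rw [sub_zero]
        exact hfk k (by omega)
    exact Nat.card_eq_of_equiv_fin (Equiv.ofBijective g hbij)
end

section
/- Let n = 2m+1 and let R_n be the dihedral quandle of order n. The involution τ on R_n ⊗ R_n induced by the swap (x, y) ↦ (y, x) is the identity map, and hence the quotient set R_n ⊗ R_n / ⟨τ⟩ has exactly m+1 elements, namely the singletons {E(k)} for k = 0, 1, …, m, where E(k) = {(i, i+k), (i, i−k) : i ∈ ℤ/nℤ}. -/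
section Aux

variable {m : ℕ}

lemma dq_step_neg {p q : ZMod (2*m+1) × ZMod (2*m+1)}
    (h : q.2 - q.1 = -(p.2 - p.1)) : (dihedral (2*m+1)).tensorStep p q := by
  refine ⟨((m : ZMod (2*m+1)) + 1) * (p.1 + q.1), ?_⟩
  have h0 : ((2*m+1 : ℕ) : ZMod (2*m+1)) = 0 := ZMod.natCast_self _
  push_cast at h0
  show q = (2 * (((m : ZMod (2*m+1)) + 1) * (p.1 + q.1)) - p.1,
            2 * (((m : ZMod (2*m+1)) + 1) * (p.1 + q.1)) - p.2)
  refine Prod.ext ?_ ?_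
  · linear_combination -(p.1 + q.1) * h0
  · linear_combination -(p.1 + q.1) * h0 + h

lemma dq_eqv_iff (p q : ZMod (2*m+1) × ZMod (2*m+1)) :
    (dihedral (2*m+1)).tensorTauEqv p q ↔
      (q.2 - q.1 = p.2 - p.1 ∨ q.2 - q.1 = -(p.2 - p.1)) := by
  constructor
  · intro h
    induction h with
    | rel a b hab =>
        rcases hab with ⟨z, rfl⟩ | rfl
        · right
          show (2*z - a.2) - (2*z - a.1) = -(a.2 - a.1)
          ring
        · right
          show a.1 - a.2 = -(a.2 - a.1)
          ring
    | refl a => left; rfl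
    | symm a b _ ih =>
        rcases ih with h | h
        · left; linear_combination -h
        · right; linear_combination h
    | trans a b c _ _ ih1 ih2 =>
        rcases ih1 with h1 | h1 <;> rcases ih2 with h2 | h2
        · left; linear_combination h1 + h2
        · right; linear_combination h2 - h1
        · right; linear_combination h1 + h2
        · left; linear_combination h2 - h1
  · intro h
    rcases h with h | h
    · refine Relation.EqvGen.trans _ ((0 : ZMod (2*m+1)), -(p.2 - p.1)) _
        (Relation.EqvGen.rel _ _ (Or.inl (dq_step_neg ?_)))
        (Relation.EqvGen.rel _ _ (Or.inl (dq_step_neg ?_)))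
      · show -(p.2 - p.1) - 0 = -(p.2 - p.1); ring
      · show q.2 - q.1 = -(-(p.2 - p.1) - 0); rw [h]; ring
    · exact Relation.EqvGen.rel _ _ (Or.inl (dq_step_neg h))

lemma mem_Eset_iff (k : ℕ) (q : ZMod (2*m+1) × ZMod (2*m+1)) :
    q ∈ Eset (2*m+1) k ↔
      (q.2 - q.1 = (k : ZMod (2*m+1)) ∨ q.2 - q.1 = -(k : ZMod (2*m+1))) := by
  constructor
  · rintro ⟨i, rfl | rfl⟩
    · left; ring
    · right; ring
  · rintro (h | h)
    · exact ⟨q.1, Or.inl (Prod.ext rfl (by linear_combination h))⟩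
    · exact ⟨q.1, Or.inr (Prod.ext rfl (by linear_combination h))⟩

lemma val_lt' (d : ZMod (2*m+1)) : d.val < 2*m+1 := ZMod.val_lt d

lemma min_le_m (d : ZMod (2*m+1)) : min d.val (2*m+1 - d.val) ≤ m := by
  have := val_lt' d
  rcases le_total d.val (2*m+1 - d.val) with h | h
  · rw [min_eq_left h]; omega
  · rw [min_eq_right h]; omega

lemma cast_min (d : ZMod (2*m+1)) :
    ((min d.val (2*m+1 - d.val) : ℕ) : ZMod (2*m+1)) = d ∨
    ((min d.val (2*m+1 - d.val) : ℕ) : ZMod (2*m+1)) = -d := by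
  have hv := val_lt' d
  rcases le_total d.val (2*m+1 - d.val) with h | h
  · left; rw [min_eq_left h]
    simp [ZMod.natCast_val, ZMod.cast_id]
  · right; rw [min_eq_right h]
    rw [Nat.cast_sub hv.le, ZMod.natCast_self]
    simp [ZMod.natCast_val, ZMod.cast_id]

lemma min_neg' (d : ZMod (2*m+1)) :
    min (-d).val (2*m+1 - (-d).val) = min d.val (2*m+1 - d.val) := by
  rcases eq_or_ne d 0 with rfl | hd
  · simp
  · have hv := val_lt' d
    have hv0 : d.val ≠ 0 := by
      simpa [ZMod.val_eq_zero] using hd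
    rw [ZMod.neg_val, if_neg hd]
    omega

end Aux

/-- for `n = 2m+1`, the involution `τ` on `R_n ⊗ R_n` is the identity
(the swap of any pair stays in its `≈`-class), and `R_n ⊗ R_n / ⟨τ⟩` has exactly
`m+1` elements, namely the (singleton) classes `E(k)` for `k = 0, …, m`. -/
theorem statement4 (m : ℕ) :
    (∀ p : ZMod (2 * m + 1) × ZMod (2 * m + 1),
      (dihedral (2 * m + 1)).tensorEqv p p.swap) ∧
    ({S : Set (ZMod (2 * m + 1) × ZMod (2 * m + 1)) |
        ∃ p, S = {q | (dihedral (2 * m + 1)).tensorTauEqv p q}} =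
      {S | ∃ k ≤ m, S = Eset (2 * m + 1) k}) ∧
    Nat.card ((dihedral (2 * m + 1)).TensorTau) = m + 1 := by
  have key := @dq_eqv_iff m
  refine ⟨?_, ?_, ?_⟩
  · intro p
    exact Relation.EqvGen.rel _ _
      (dq_step_neg (show p.1 - p.2 = -(p.2 - p.1) by ring))
  · ext S
    simp only [Set.mem_setOf_eq]
    constructor
    · rintro ⟨p, rfl⟩
      refine ⟨min (p.2 - p.1).val (2*m+1 - (p.2 - p.1).val), min_le_m _, ?_⟩
      ext q
      rw [Set.mem_setOf_eq, dq_eqv_iff, mem_Eset_iff]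
      rcases cast_min (p.2 - p.1) with h | h
      · rw [h]
      · rw [h, neg_neg]; tauto
    · rintro ⟨k, hk, rfl⟩
      refine ⟨((0 : ZMod (2*m+1)), (k : ZMod (2*m+1))), ?_⟩
      ext q
      rw [Set.mem_setOf_eq, dq_eqv_iff, mem_Eset_iff]
      simp
  · have e : (dihedral (2*m+1)).TensorTau ≃ Fin (m+1) := {
      toFun := Quotient.lift
        (fun p : ZMod (2*m+1) × ZMod (2*m+1) =>
          (⟨min (p.2 - p.1).val (2*m+1 - (p.2 - p.1).val),
            Nat.lt_succ_of_le (min_le_m _)⟩ : Fin (m+1)))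
        (by
          intro a b hab
          rcases (dq_eqv_iff a b).mp hab with h | h
          · refine Fin.ext ?_
            show min (a.2 - a.1).val (2*m+1 - (a.2 - a.1).val)
               = min (b.2 - b.1).val (2*m+1 - (b.2 - b.1).val)
            rw [h]
          · refine Fin.ext ?_
            show min (a.2 - a.1).val (2*m+1 - (a.2 - a.1).val)
               = min (b.2 - b.1).val (2*m+1 - (b.2 - b.1).val)
            rw [h, min_neg'])
      invFun := fun k =>
        Quotient.mk _ ((0 : ZMod (2*m+1)), ((k : ℕ) : ZMod (2*m+1)))
      left_inv := by
        refine fun x => Quotient.inductionOn x (fun p => ?_)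
        refine Quotient.sound ?_
        refine (dq_eqv_iff _ p).mpr ?_
        rcases cast_min (p.2 - p.1) with h | h
        · left
          show p.2 - p.1 =
            ((min (p.2 - p.1).val (2*m+1 - (p.2 - p.1).val) : ℕ) : ZMod (2*m+1)) - 0
          rw [h, sub_zero]
        · right
          show p.2 - p.1 =
            -(((min (p.2 - p.1).val (2*m+1 - (p.2 - p.1).val) : ℕ) : ZMod (2*m+1)) - 0)
          rw [h, sub_zero, neg_neg]
      right_inv := by
        intro k
        have hk : (k : ℕ) < 2*m+1 := by omega
        apply Fin.ext
        show min (((k : ℕ) : ZMod (2*m+1)) - 0).val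
            (2*m+1 - (((k : ℕ) : ZMod (2*m+1)) - 0).val) = (k : ℕ)
        rw [sub_zero, ZMod.val_cast_of_lt hk]
        have : (k : ℕ) ≤ m := by omega
        omega }
    exact Nat.card_eq_of_equiv_fin e
end

section
/- Let n = 2m with m ≥ 1 and let R_n be the dihedral quandle of order n. Two pairs (x, y), (x', y') ∈ R_n × R_n are equivalent under the relation ≈ defining R_n ⊗ R_n if and only if d_n(x, y) = d_n(x', y') and x − x' is even. Consequently, the equivalence classes are exactly the sets E(k)_0 = {(i, i+k), (i, i−k) : i ∈ R_{n,even}} and E(k)_1 = {(i, i+k), (i, i−k) : i ∈ R_{n,odd}} for k = 0, 1, …, m, and R_n ⊗ R_n has exactly n+2 = 2m+2 elements. -/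
/-- `E(k)₀ = {(i, i+k), (i, i−k) : i ∈ R_{n,even}}`. -/
def Eset0 (n k : ℕ) : Set (ZMod n × ZMod n) :=
  {p | ∃ i : ZMod n, isEvenClass n i ∧
    (p = (i, i + (k : ZMod n)) ∨ p = (i, i - (k : ZMod n)))}

/-- `E(k)₁ = {(i, i+k), (i, i−k) : i ∈ R_{n,odd}}`. -/
def Eset1 (n k : ℕ) : Set (ZMod n × ZMod n) :=
  {p | ∃ i : ZMod n, isOddClass n i ∧
    (p = (i, i + (k : ZMod n)) ∨ p = (i, i - (k : ZMod n)))}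


namespace Stmt5Aux

open QuandleStr

lemma ncast_val {n : ℕ} [NeZero n] (a : ZMod n) : ((a.val : ℕ) : ZMod n) = a := by
  simp [ZMod.natCast_val, ZMod.cast_id]

lemma cast_val {n : ℕ} [NeZero n] (a : ZMod n) : ((a.val : ℤ) : ZMod n) = a := by
  push_cast
  simp [ZMod.natCast_val, ZMod.cast_id]

/-- one basic move -/
lemma bstep {n : ℕ} (x y x' : ZMod n) (h : ∃ w, x - x' = 2 * w) :
    (dihedral n).tensorEqv (x, y) (x', x' - (y - x)) := by
  obtain ⟨w, hw⟩ := h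
  apply Relation.EqvGen.rel
  refine ⟨x - w, ?_⟩
  show (x', x' - (y - x)) = (2 * (x - w) - x, 2 * (x - w) - y)
  simp only [Prod.mk.injEq]
  constructor <;> linear_combination -hw

lemma fwd {n : ℕ} {p q : ZMod n × ZMod n} (h : (dihedral n).tensorEqv p q) :
    (q.2 - q.1 = p.2 - p.1 ∨ q.2 - q.1 = -(p.2 - p.1)) ∧ ∃ w, p.1 - q.1 = 2 * w := by
  induction h with
  | rel a b hab =>
      obtain ⟨z, rfl⟩ := hab
      refine ⟨Or.inr ?_, a.1 - z, ?_⟩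
      · show (2*z - a.2) - (2*z - a.1) = _; ring
      · show a.1 - (2*z - a.1) = _; ring
  | refl a => exact ⟨Or.inl rfl, 0, by ring⟩
  | symm a b _ ih =>
      obtain ⟨hs, w, hw⟩ := ih
      refine ⟨?_, -w, by linear_combination -hw⟩
      rcases hs with h1 | h1
      · exact Or.inl (by linear_combination -h1)
      · exact Or.inr (by linear_combination h1)
  | trans a b c _ _ ih1 ih2 =>
      obtain ⟨hs1, w1, hw1⟩ := ih1
      obtain ⟨hs2, w2, hw2⟩ := ih2
      refine ⟨?_, w1 + w2, by linear_combination hw1 + hw2⟩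
      rcases hs1 with h1 | h1 <;> rcases hs2 with h2 | h2
      · exact Or.inl (by linear_combination h2 + h1)
      · exact Or.inr (by linear_combination h2 - h1)
      · exact Or.inr (by linear_combination h2 + h1)
      · exact Or.inl (by linear_combination h2 - h1)

lemma eqv_iff {n : ℕ} (x y x' y' : ZMod n) :
    (dihedral n).tensorEqv (x, y) (x', y') ↔
      (y' - x' = y - x ∨ y' - x' = -(y - x)) ∧ ∃ w, x - x' = 2 * w := by
  constructor
  · intro h
    exact fwd h
  · rintro ⟨hs, hev⟩
    rcases hs with h1 | h1
    · refine Relation.EqvGen.trans _ (x, x - (y - x)) _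
        (bstep x y x ⟨0, by ring⟩) ?_
      have hb := bstep x (x - (y - x)) x' hev
      have he : x' - ((x - (y - x)) - x) = y' := by linear_combination -h1
      rwa [he] at hb
    · have hb := bstep x y x' hev
      have he : x' - (y - x) = y' := by linear_combination -h1
      rwa [he] at hb

lemma mem_ddist_set {n : ℕ} [NeZero n] (x y : ZMod n) (d : ℕ) :
    (∃ a b : ℤ, (a : ZMod n) = x ∧ (b : ZMod n) = y ∧ (a - b).natAbs = d) ↔
      ∃ t : ℤ, (t : ZMod n) = x - y ∧ t.natAbs = d := by
  constructor
  · rintro ⟨a, b, ha, hb, rfl⟩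
    exact ⟨a - b, by push_cast [ha, hb]; ring, rfl⟩
  · rintro ⟨t, ht, rfl⟩
    refine ⟨t + y.val, y.val, ?_, cast_val y, by ring_nf⟩
    rw [Int.cast_add, ht, cast_val]
    ring

lemma ddist_eq {n : ℕ} [NeZero n] (x y : ZMod n) :
    ddist n x y = min (x - y).val (y - x).val := by
  apply le_antisymm
  · rcases le_total (x - y).val (y - x).val with h | h
    · rw [min_eq_left h]
      apply Nat.sInf_le
      exact (mem_ddist_set x y _).mpr ⟨(x - y).val, cast_val _, Int.natAbs_natCast _⟩
    · rw [min_eq_right h]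
      apply Nat.sInf_le
      refine (mem_ddist_set x y _).mpr ⟨-((y - x).val : ℤ), ?_,
        by rw [Int.natAbs_neg, Int.natAbs_natCast]⟩
      rw [Int.cast_neg, cast_val]
      ring
  · apply le_csInf
    · exact ⟨(x - y).val,
        (mem_ddist_set x y _).mpr ⟨(x - y).val, cast_val _, Int.natAbs_natCast _⟩⟩
    · intro d hd
      obtain ⟨t, ht, rfl⟩ := (mem_ddist_set x y d).mp hd
      set v := (x - y).val with hv
      set w := (y - x).val with hwdef
      have hdvd : (n : ℤ) ∣ t - v := by
        rw [← ZMod.intCast_zmod_eq_zero_iff_dvd]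
        push_cast
        rw [ht, hv, ncast_val]
        ring
      obtain ⟨k, hk⟩ := hdvd
      have hvlt : v < n := ZMod.val_lt _
      have hwlt : w < n := ZMod.val_lt _
      have hvw : v + w = 0 ∨ (v : ℤ) + w = n := by
        have hd2 : (n : ℤ) ∣ (v : ℤ) + w := by
          rw [← ZMod.intCast_zmod_eq_zero_iff_dvd]
          push_cast
          rw [hv, hwdef, ncast_val, ncast_val]
          ring
        obtain ⟨c, hc⟩ := hd2
        have hn : 0 < (n : ℤ) := by exact_mod_cast (NeZero.pos n)
        have hc0 : 0 ≤ c := by nlinarith [Int.natCast_nonneg v, Int.natCast_nonneg w]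
        have hc2 : c < 2 := by nlinarith [Int.natCast_nonneg v, Int.natCast_nonneg w]
        interval_cases c
        · left; omega
        · right; omega
      rcases le_or_gt 0 k with hk0 | hk0
      · have h1' : (v : ℤ) ≤ t := by nlinarith
        have h2' : (v : ℤ) ≤ t.natAbs := le_trans h1' Int.le_natAbs
        omega
      · have hk1 : k ≤ -1 := by omega
        have ht' : t ≤ (v : ℤ) - n := by nlinarith
        have h3' : (n : ℤ) - v ≤ -t := by omega
        have habs : (n : ℤ) - v ≤ t.natAbs :=
          le_trans h3' (by rw [← Int.natAbs_neg]; exact Int.le_natAbs)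
        rcases hvw with h0 | h0 <;> omega

lemma parityH {m : ℕ} (hm : 1 ≤ m) (a : ℤ) (t : ZMod (2 * m)) (h : (a : ZMod (2 * m)) = t) :
    (Even a ↔ Even t.val) := by
  haveI : NeZero (2 * m) := ⟨by omega⟩
  have hdvd : ((2 * m : ℕ) : ℤ) ∣ a - t.val := by
    rw [← ZMod.intCast_zmod_eq_zero_iff_dvd]
    push_cast
    rw [h, ncast_val]
    ring
  have h2 : (2 : ℤ) ∣ a - t.val := dvd_trans ⟨m, by push_cast; ring⟩ hdvd
  obtain ⟨c, hc⟩ := h2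
  have hev : Even (a - (t.val : ℤ)) := ⟨c, by omega⟩
  have := Int.even_sub.mp hev
  rwa [Int.even_coe_nat] at this

lemma isEven_iff {m : ℕ} (hm : 1 ≤ m) (t : ZMod (2 * m)) :
    isEvenClass (2 * m) t ↔ Even t.val := by
  haveI : NeZero (2 * m) := ⟨by omega⟩
  constructor
  · rintro ⟨a, ha, hc⟩
    exact (parityH hm a t hc).mp ha
  · intro h
    exact ⟨t.val, (parityH hm t.val t (cast_val t)).mpr h, cast_val t⟩

lemma isOdd_iff {m : ℕ} (hm : 1 ≤ m) (t : ZMod (2 * m)) :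
    isOddClass (2 * m) t ↔ ¬ Even t.val := by
  haveI : NeZero (2 * m) := ⟨by omega⟩
  constructor
  · rintro ⟨a, ha, hc⟩
    rw [← parityH hm a t hc]
    exact Int.not_even_iff_odd.mpr ha
  · intro h
    refine ⟨t.val, ?_, cast_val t⟩
    rw [Int.not_even_iff_odd.symm, parityH hm t.val t (cast_val t)]
    exact h

lemma even_sub_iff {m : ℕ} (hm : 1 ≤ m) (x x' : ZMod (2 * m)) :
    isEvenClass (2 * m) (x - x') ↔ (Even x.val ↔ Even x'.val) := by
  haveI : NeZero (2 * m) := ⟨by omega⟩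
  rw [isEven_iff hm]
  have h := parityH hm ((x.val : ℤ) - x'.val) (x - x')
    (by rw [Int.cast_sub, cast_val, cast_val])
  rw [← h, Int.even_sub, Int.even_coe_nat, Int.even_coe_nat]

lemma evenClass_iff_two_mul {m : ℕ} (hm : 1 ≤ m) (t : ZMod (2 * m)) :
    isEvenClass (2 * m) t ↔ ∃ w, t = 2 * w := by
  haveI : NeZero (2 * m) := ⟨by omega⟩
  constructor
  · rintro ⟨a, ⟨b, hb⟩, hc⟩
    refine ⟨(b : ZMod (2 * m)), ?_⟩
    rw [← hc, hb]
    push_cast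
    ring
  · rintro ⟨w, rfl⟩
    refine ⟨2 * (w.val : ℤ), ⟨w.val, by ring⟩, ?_⟩
    push_cast
    rw [ncast_val]

lemma min_val_eq_iff {N : ℕ} [NeZero N] (c c' : ZMod N) :
    min (-c).val c.val = min (-c').val c'.val ↔ (c = c' ∨ c = -c') := by
  constructor
  · intro h
    rcases min_cases (-c).val c.val with ⟨h1, _⟩ | ⟨h1, _⟩ <;>
      rcases min_cases (-c').val c'.val with ⟨h2, _⟩ | ⟨h2, _⟩ <;>
      rw [h1, h2] at h <;> have := ZMod.val_injective N h
    · exact Or.inl (neg_injective this)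
    · exact Or.inr (by rw [← this, neg_neg])
    · exact Or.inr (by rw [this])
    · exact Or.inl this
  · rintro (rfl | rfl)
    · rfl
    · rw [neg_neg, min_comm]

lemma ddist_eq_iff {N : ℕ} [NeZero N] (x y x' y' : ZMod N) :
    ddist N x y = ddist N x' y' ↔ (y - x = y' - x' ∨ y - x = -(y' - x')) := by
  rw [ddist_eq, ddist_eq]
  have e1 : x - y = -(y - x) := by ring
  have e2 : x' - y' = -(y' - x') := by ring
  rw [e1, e2]
  exact min_val_eq_iff (y - x) (y' - x')

lemma val_natCast_le {m : ℕ} (hm : 1 ≤ m) {k : ℕ} (hk : k ≤ m) :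
    ((k : ℕ) : ZMod (2 * m)).val = k := by
  rw [ZMod.val_natCast, Nat.mod_eq_of_lt (by omega)]

lemma ddist_zero_k {m : ℕ} (hm : 1 ≤ m) {k : ℕ} (hk : k ≤ m) :
    ddist (2 * m) (0 : ZMod (2 * m)) (k : ZMod (2 * m)) = k := by
  haveI : NeZero (2 * m) := ⟨by omega⟩
  rw [ddist_eq, zero_sub, sub_zero]
  rcases Nat.eq_zero_or_pos k with rfl | hk0
  · simp
  · have hne : ((k : ℕ) : ZMod (2 * m)) ≠ 0 := by
      intro h
      have := congrArg ZMod.val h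
      rw [val_natCast_le hm hk, ZMod.val_zero] at this
      omega
    rw [ZMod.neg_val, if_neg hne, val_natCast_le hm hk]
    omega

lemma ddist_le {m : ℕ} (hm : 1 ≤ m) (x y : ZMod (2 * m)) :
    ddist (2 * m) x y ≤ m := by
  haveI : NeZero (2 * m) := ⟨by omega⟩
  rw [ddist_eq]
  have e1 : y - x = -(x - y) := by ring
  rw [e1, ZMod.neg_val]
  split
  · next h => rw [h]; simp
  · have := ZMod.val_lt (x - y)
    omega

lemma ddist_iff {m : ℕ} (hm : 1 ≤ m) (x y : ZMod (2 * m)) {k : ℕ} (hk : k ≤ m) :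
    ddist (2 * m) x y = k ↔ (y - x = (k : ZMod (2 * m)) ∨ y - x = -(k : ZMod (2 * m))) := by
  haveI : NeZero (2 * m) := ⟨by omega⟩
  conv_lhs => rw [← ddist_zero_k hm hk]
  rw [ddist_eq_iff, sub_zero]

lemma main_iff {m : ℕ} (hm : 1 ≤ m) (x y x' y' : ZMod (2 * m)) :
    (dihedral (2 * m)).tensorEqv (x, y) (x', y') ↔
      ddist (2 * m) x y = ddist (2 * m) x' y' ∧ isEvenClass (2 * m) (x - x') := by
  haveI : NeZero (2 * m) := ⟨by omega⟩
  rw [eqv_iff, ddist_eq_iff, evenClass_iff_two_mul hm]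
  constructor
  · rintro ⟨h1 | h1, h2⟩
    · exact ⟨Or.inl h1.symm, h2⟩
    · exact ⟨Or.inr (by linear_combination h1), h2⟩
  · rintro ⟨h1 | h1, h2⟩
    · exact ⟨Or.inl h1.symm, h2⟩
    · exact ⟨Or.inr (by linear_combination h1), h2⟩

lemma mem_Eset0 {n k : ℕ} (q : ZMod n × ZMod n) :
    q ∈ Eset0 n k ↔ isEvenClass n q.1 ∧
      (q.2 - q.1 = (k : ZMod n) ∨ q.2 - q.1 = -(k : ZMod n)) := by
  obtain ⟨q1, q2⟩ := q
  constructor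
  · rintro ⟨i, hi, h | h⟩ <;> rw [Prod.mk.injEq] at h <;> obtain ⟨rfl, rfl⟩ := h
    · exact ⟨hi, Or.inl (by ring)⟩
    · exact ⟨hi, Or.inr (by ring)⟩
  · rintro ⟨hi, h | h⟩
    · exact ⟨q1, hi, Or.inl (by rw [Prod.mk.injEq]; exact ⟨rfl, by linear_combination h⟩)⟩
    · exact ⟨q1, hi, Or.inr (by rw [Prod.mk.injEq]; exact ⟨rfl, by linear_combination h⟩)⟩

lemma mem_Eset1 {n k : ℕ} (q : ZMod n × ZMod n) :
    q ∈ Eset1 n k ↔ isOddClass n q.1 ∧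
      (q.2 - q.1 = (k : ZMod n) ∨ q.2 - q.1 = -(k : ZMod n)) := by
  obtain ⟨q1, q2⟩ := q
  constructor
  · rintro ⟨i, hi, h | h⟩ <;> rw [Prod.mk.injEq] at h <;> obtain ⟨rfl, rfl⟩ := h
    · exact ⟨hi, Or.inl (by ring)⟩
    · exact ⟨hi, Or.inr (by ring)⟩
  · rintro ⟨hi, h | h⟩
    · exact ⟨q1, hi, Or.inl (by rw [Prod.mk.injEq]; exact ⟨rfl, by linear_combination h⟩)⟩
    · exact ⟨q1, hi, Or.inr (by rw [Prod.mk.injEq]; exact ⟨rfl, by linear_combination h⟩)⟩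

end Stmt5Aux

/-- for `n = 2m` with `m ≥ 1`, two pairs are `≈`-equivalent iff they
have the same distance and `x − x'` is even; the classes are exactly the sets
`E(k)₀`, `E(k)₁` for `k = 0, …, m`, and `R_n ⊗ R_n` has exactly `n+2 = 2m+2`
elements. -/
theorem statement5 (m : ℕ) (hm : 1 ≤ m) :
    (∀ x y x' y' : ZMod (2 * m),
      (dihedral (2 * m)).tensorEqv (x, y) (x', y') ↔
        ddist (2 * m) x y = ddist (2 * m) x' y' ∧ isEvenClass (2 * m) (x - x')) ∧
    ({S : Set (ZMod (2 * m) × ZMod (2 * m)) |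
        ∃ p, S = {q | (dihedral (2 * m)).tensorEqv p q}} =
      {S | ∃ k ≤ m, S = Eset0 (2 * m) k ∨ S = Eset1 (2 * m) k}) ∧
    Nat.card ((dihedral (2 * m)).Tensor) = 2 * m + 2 := by
  haveI : NeZero (2 * m) := ⟨by omega⟩
  haveI : NeZero m := ⟨by omega⟩
  open Stmt5Aux in
  refine ⟨fun x y x' y' => main_iff hm x y x' y', ?_, ?_⟩
  · ext S
    simp only [Set.mem_setOf_eq]
    constructor
    · rintro ⟨⟨x, y⟩, rfl⟩
      refine ⟨ddist (2 * m) x y, ddist_le hm x y, ?_⟩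
      have hdk : y - x = ((ddist (2 * m) x y : ℕ) : ZMod (2 * m)) ∨
          y - x = -((ddist (2 * m) x y : ℕ) : ZMod (2 * m)) :=
        (ddist_iff hm x y (ddist_le hm x y)).mp rfl
      by_cases he : Even x.val
      · left
        ext ⟨x', y'⟩
        rw [Set.mem_setOf_eq, main_iff hm, mem_Eset0,
          @eq_comm ℕ (ddist (2 * m) x y) (ddist (2 * m) x' y'),
          ddist_iff hm x' y' (ddist_le hm x y), even_sub_iff hm, isEven_iff hm]
        tauto
      · right
        ext ⟨x', y'⟩
        rw [Set.mem_setOf_eq, main_iff hm, mem_Eset1,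
          @eq_comm ℕ (ddist (2 * m) x y) (ddist (2 * m) x' y'),
          ddist_iff hm x' y' (ddist_le hm x y), even_sub_iff hm, isOdd_iff hm]
        tauto
    · rintro ⟨k, hk, h | h⟩
      · refine ⟨((0 : ZMod (2 * m)), (k : ZMod (2 * m))), ?_⟩
        rw [h]
        ext ⟨x', y'⟩
        rw [Set.mem_setOf_eq, main_iff hm, mem_Eset0, ddist_zero_k hm hk,
          @eq_comm ℕ k (ddist (2 * m) x' y'),
          ddist_iff hm x' y' hk, even_sub_iff hm, isEven_iff hm, ZMod.val_zero]
        have h0 : Even (0 : ℕ) := Even.zero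
        tauto
      · refine ⟨((1 : ZMod (2 * m)), 1 + (k : ZMod (2 * m))), ?_⟩
        have hone : (1 : ZMod (2 * m)).val = 1 := by
          haveI : Fact (1 < 2 * m) := ⟨by omega⟩
          exact ZMod.val_one (2 * m)
        have hd1 : ddist (2 * m) (1 : ZMod (2 * m)) (1 + (k : ZMod (2 * m))) = k :=
          (ddist_iff hm _ _ hk).mpr (Or.inl (by ring))
        rw [h]
        ext ⟨x', y'⟩
        rw [Set.mem_setOf_eq, main_iff hm, mem_Eset1, hd1,
          @eq_comm ℕ k (ddist (2 * m) x' y'),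
          ddist_iff hm x' y' hk, even_sub_iff hm, isOdd_iff hm, hone]
        have h1 : ¬ Even (1 : ℕ) := by decide
        tauto
  · have hle : ∀ p : ZMod (2 * m) × ZMod (2 * m), ddist (2 * m) p.1 p.2 < m + 1 :=
      fun p => Nat.lt_succ_of_le (ddist_le hm p.1 p.2)
    set f : ZMod (2 * m) × ZMod (2 * m) → Fin (m + 1) × Bool :=
      fun p => (⟨ddist (2 * m) p.1 p.2, hle p⟩, (p.1.val % 2 == 0 : Bool)) with hf
    have key : ∀ p q, (dihedral (2 * m)).tensorEqv p q ↔ f p = f q := by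
      rintro ⟨x, y⟩ ⟨x', y'⟩
      rw [main_iff hm, even_sub_iff hm, hf]
      simp only [Prod.mk.injEq, Fin.mk.injEq]
      have hb : ((x.val % 2 == 0) = (x'.val % 2 == 0)) ↔ (Even x.val ↔ Even x'.val) := by
        rw [Nat.even_iff, Nat.even_iff]
        rcases Nat.mod_two_eq_zero_or_one x.val with h | h <;>
          rcases Nat.mod_two_eq_zero_or_one x'.val with h' | h' <;> simp [h, h']
      rw [hb]
    have hsound : ∀ p q : ZMod (2 * m) × ZMod (2 * m),
        Relation.EqvGen ((dihedral (2 * m)).tensorStep) p q → f p = f q :=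
      fun p q h => (key p q).mp h
    let F : (dihedral (2 * m)).Tensor → Fin (m + 1) × Bool :=
      Quotient.lift f hsound
    have hbij : Function.Bijective F := by
      constructor
      · rintro ⟨p⟩ ⟨q⟩ h
        exact Quotient.sound ((key p q).mpr h)
      · rintro ⟨⟨k, hklt⟩, b⟩
        have hk : k ≤ m := by omega
        cases b
        · refine ⟨Quotient.mk _ ((1 : ZMod (2 * m)), 1 + (k : ZMod (2 * m))), ?_⟩
          have hone : (1 : ZMod (2 * m)).val = 1 := by
            haveI : Fact (1 < 2 * m) := ⟨by omega⟩
            exact ZMod.val_one (2 * m)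
          have hd1 : ddist (2 * m) (1 : ZMod (2 * m)) (1 + (k : ZMod (2 * m))) = k :=
            (ddist_iff hm _ _ hk).mpr (Or.inl (by ring))
          show f _ = _
          rw [hf]
          simp only [Prod.mk.injEq, Fin.mk.injEq]
          exact ⟨hd1, by rw [hone]; rfl⟩
        · refine ⟨Quotient.mk _ ((0 : ZMod (2 * m)), (k : ZMod (2 * m))), ?_⟩
          have hd0 : ddist (2 * m) (0 : ZMod (2 * m)) (k : ZMod (2 * m)) = k :=
            ddist_zero_k hm hk
          show f _ = _
          rw [hf]
          simp only [Prod.mk.injEq, Fin.mk.injEq]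
          exact ⟨hd0, by rw [ZMod.val_zero]; rfl⟩
    have hcard := Nat.card_eq_of_bijective F hbij
    rw [hcard]
    simp only [Nat.card_eq_fintype_card, Fintype.card_prod, Fintype.card_fin,
      Fintype.card_bool]
    omega
end

section
/- Let n = 2m with m ≥ 1 and let R_n be the dihedral quandle of order n. The quotient set R_n ⊗ R_n / ⟨τ⟩ has exactly 3(m+1)/2 elements if m is odd, and exactly 3m/2 + 2 elements if m is even; its elements are {E(k)_0} and {E(k)_1} for even k with 0 ≤ k ≤ m, and {E(k)_0, E(k)_1} for odd k with 0 ≤ k ≤ m, where E(k)_0 = {(i, i+k), (i, i−k) : i ∈ R_{n,even}} and E(k)_1 = {(i, i+k), (i, i−k) : i ∈ R_{n,odd}}. -/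
namespace S6

/-- parity homomorphism -/
def phi (m : ℕ) : ZMod (2*m) →+* ZMod 2 := ZMod.castHom ⟨m, rfl⟩ (ZMod 2)

lemma zmod2_cases (y : ZMod 2) : y = 0 ∨ y = 1 := by revert y; decide

lemma zmod2_neg (y : ZMod 2) : -y = y := by revert y; decide

lemma phi_nat (m k : ℕ) : phi m ((k : ZMod (2*m))) = (k : ZMod 2) := map_natCast _ _

lemma phi_int (m : ℕ) (a : ℤ) : phi m ((a : ZMod (2*m))) = (a : ZMod 2) := map_intCast _ _

lemma phi_two_mul (m : ℕ) (y : ZMod (2*m)) : phi m (2*y) = 0 := by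
  rw [map_mul, show ((2 : ZMod (2*m))) = ((2:ℕ) : ZMod (2*m)) by norm_cast, phi_nat,
    show ((2:ℕ) : ZMod 2) = 0 by decide, zero_mul]

lemma evenClass_iff (m : ℕ) [NeZero (2*m)] (x : ZMod (2*m)) :
    isEvenClass (2*m) x ↔ phi m x = 0 := by
  constructor
  · rintro ⟨a, ⟨b, rfl⟩, rfl⟩
    rw [phi_int, ZMod.intCast_zmod_eq_zero_iff_dvd]
    exact ⟨b, by push_cast; ring⟩
  · intro h
    have hx : ((x.val : ℤ) : ZMod (2*m)) = x := by push_cast; exact ZMod.natCast_zmod_val x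
    rw [← hx, phi_int] at h
    have h2 : ((2:ℕ):ℤ) ∣ (x.val : ℤ) := by
      rwa [ZMod.intCast_zmod_eq_zero_iff_dvd] at h
    obtain ⟨c, hc⟩ := h2
    exact ⟨(x.val : ℤ), ⟨c, by omega⟩, hx⟩

lemma oddClass_iff (m : ℕ) [NeZero (2*m)] (x : ZMod (2*m)) :
    isOddClass (2*m) x ↔ phi m x = 1 := by
  constructor
  · rintro ⟨a, ⟨b, rfl⟩, rfl⟩
    rw [phi_int]
    have : ((2*b+1 : ℤ) : ZMod 2) = 2*(b : ZMod 2)+1 := by push_cast; ring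
    rw [this, show ((2:ZMod 2)) = 0 by decide]
    ring
  · intro h
    have hx : ((x.val : ℤ) : ZMod (2*m)) = x := by push_cast; exact ZMod.natCast_zmod_val x
    rw [← hx, phi_int] at h
    have h2 : ¬ ((2:ℕ):ℤ) ∣ (x.val : ℤ) := by
      intro hd
      rw [← ZMod.intCast_zmod_eq_zero_iff_dvd, h] at hd
      exact one_ne_zero hd
    rw [show ((2:ℕ):ℤ) = 2 by norm_num, Int.two_dvd_ne_zero] at h2
    exact ⟨(x.val : ℤ), Int.odd_iff.mpr h2, hx⟩

lemma two_mul_iff (m : ℕ) [NeZero (2*m)] (x : ZMod (2*m)) :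
    (∃ t, x = 2*t) ↔ phi m x = 0 := by
  constructor
  · rintro ⟨t, rfl⟩; exact phi_two_mul m t
  · intro h
    have hx : ((x.val : ℕ) : ZMod (2*m)) = x := ZMod.natCast_zmod_val x
    rw [← hx, phi_nat, ZMod.natCast_eq_zero_iff] at h
    obtain ⟨c, hc⟩ := h
    exact ⟨(c : ZMod (2*m)), by rw [← hx, hc]; push_cast; ring⟩

end S6
namespace S6

/-- The invariant characterizing the tensor equivalence. -/
def A (m : ℕ) (p q : ZMod (2*m) × ZMod (2*m)) : Prop :=
  phi m (q.1 - p.1) = 0 ∧ (q.2 - q.1 = p.2 - p.1 ∨ q.2 - q.1 = p.1 - p.2)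

lemma A_refl (m : ℕ) (p : ZMod (2*m) × ZMod (2*m)) : A m p p :=
  ⟨by simp, Or.inl rfl⟩

lemma A_symm {m : ℕ} {p q : ZMod (2*m) × ZMod (2*m)} (h : A m p q) : A m q p := by
  obtain ⟨h1, h2⟩ := h
  refine ⟨?_, ?_⟩
  · rw [show p.1 - q.1 = -(q.1 - p.1) by ring, map_neg, h1, neg_zero]
  · rcases h2 with h2 | h2
    · exact Or.inl (by linear_combination -h2)
    · exact Or.inr (by linear_combination h2)

lemma A_trans {m : ℕ} {p q r : ZMod (2*m) × ZMod (2*m)} (h : A m p q) (h' : A m q r) :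
    A m p r := by
  obtain ⟨h1, h2⟩ := h; obtain ⟨h1', h2'⟩ := h'
  refine ⟨?_, ?_⟩
  · rw [show r.1 - p.1 = (r.1 - q.1) + (q.1 - p.1) by ring, map_add, h1, h1', add_zero]
  · rcases h2 with h2 | h2 <;> rcases h2' with h2' | h2'
    · exact Or.inl (by linear_combination h2 + h2')
    · exact Or.inr (by linear_combination -h2 + h2')
    · exact Or.inr (by linear_combination h2 + h2')
    · exact Or.inl (by linear_combination -h2 + h2')

lemma A_swap {m : ℕ} {p q : ZMod (2*m) × ZMod (2*m)} (h : A m p q) : A m p.swap q.swap := by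
  obtain ⟨h1, h2⟩ := h
  constructor
  · show phi m (q.2 - p.2) = 0
    rcases h2 with h2 | h2
    · rw [show q.2 - p.2 = q.1 - p.1 by linear_combination h2]; exact h1
    · rw [show q.2 - p.2 = (q.1 - p.1) + 2*(p.1 - p.2) by linear_combination h2,
        map_add, h1, phi_two_mul, add_zero]
  · show q.1 - q.2 = p.1 - p.2 ∨ q.1 - q.2 = p.2 - p.1
    rcases h2 with h2 | h2
    · exact Or.inl (by linear_combination -h2)
    · exact Or.inr (by linear_combination -h2)

lemma A_swap_iff {m : ℕ} (p q : ZMod (2*m) × ZMod (2*m)) : A m p q ↔ A m p.swap q.swap :=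
  ⟨A_swap, fun h => by simpa using A_swap h⟩

lemma step_tauEqv {m : ℕ} [NeZero (2*m)] {p q : ZMod (2*m) × ZMod (2*m)} (h : A m p q) :
    (dihedral (2*m)).tensorTauEqv p q := by
  obtain ⟨h1, h2⟩ := h
  obtain ⟨t, ht⟩ := (two_mul_iff m _).mpr h1
  have step : ∀ (r s : ZMod (2*m) × ZMod (2*m)), (∃ z, s = (2*z - r.1, 2*z - r.2)) →
      (dihedral (2*m)).tensorTauEqv r s := by
    rintro r s ⟨z, rfl⟩
    exact Relation.EqvGen.rel _ _ (Or.inl ⟨z, rfl⟩)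
  rcases h2 with h2 | h2
  · -- same sign: two steps through (p.1, 2*p.1 - p.2)
    refine Relation.EqvGen.trans _ (p.1, 2*p.1 - p.2) _ ?_ ?_
    · exact step _ _ ⟨p.1, by ext <;> simp <;> ring⟩
    · refine step _ _ ⟨t + p.1, ?_⟩
      have e1 : q.1 = 2*(t + p.1) - p.1 := by linear_combination ht
      have e2 : q.2 = 2*(t + p.1) - (2*p.1 - p.2) := by linear_combination ht + h2
      exact Prod.ext e1 e2
  · -- opposite sign: single step
    refine step _ _ ⟨t + p.1, ?_⟩
    have e1 : q.1 = 2*(t + p.1) - p.1 := by linear_combination ht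
    have e2 : q.2 = 2*(t + p.1) - p.2 := by linear_combination ht + h2
    exact Prod.ext e1 e2

lemma tauEqv_iff {m : ℕ} [NeZero (2*m)] (p q : ZMod (2*m) × ZMod (2*m)) :
    (dihedral (2*m)).tensorTauEqv p q ↔ A m p q ∨ A m p q.swap := by
  constructor
  · intro h
    induction h with
    | rel x y hxy =>
      rcases hxy with ⟨z, rfl⟩ | rfl
      · refine Or.inl ⟨?_, Or.inr (by show (2*z - x.2) - (2*z - x.1) = _; ring)⟩
        show phi m ((2*z - x.1) - x.1) = 0
        rw [show (2*z - x.1) - x.1 = 2*(z - x.1) by ring]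
        exact phi_two_mul m _
      · exact Or.inr (by simpa using A_refl m x)
    | refl x => exact Or.inl (A_refl m x)
    | symm x y _ ih =>
      rcases ih with h | h
      · exact Or.inl (A_symm h)
      · exact Or.inr (by simpa using A_swap (A_symm h))
    | trans x y z _ _ ih1 ih2 =>
      rcases ih1 with h1 | h1 <;> rcases ih2 with h2 | h2
      · exact Or.inl (A_trans h1 h2)
      · exact Or.inr (A_trans h1 h2)
      · exact Or.inr (A_trans h1 (by simpa using A_swap h2))
      · exact Or.inl (A_trans h1 (by simpa using A_swap h2))
  · intro h
    rcases h with h | h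
    · exact step_tauEqv h
    · refine Relation.EqvGen.trans _ q.swap _ (step_tauEqv h) ?_
      exact Relation.EqvGen.rel _ _ (Or.inr (by simp))
end S6
namespace S6

lemma Eset0_eq (m k : ℕ) [NeZero (2*m)] :
    Eset0 (2*m) k = {q : ZMod (2*m) × ZMod (2*m) |
      phi m q.1 = 0 ∧ (q.2 - q.1 = (k : ZMod (2*m)) ∨ q.2 - q.1 = -(k : ZMod (2*m)))} := by
  ext ⟨x, y⟩
  simp only [Eset0, Set.mem_setOf_eq, Prod.mk.injEq]
  constructor
  · rintro ⟨i, hi, (⟨rfl, rfl⟩ | ⟨rfl, rfl⟩)⟩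
    · exact ⟨(evenClass_iff m _).mp hi, Or.inl (by ring)⟩
    · exact ⟨(evenClass_iff m _).mp hi, Or.inr (by ring)⟩
  · rintro ⟨h1, (h2 | h2)⟩
    · exact ⟨x, (evenClass_iff m _).mpr h1, Or.inl ⟨rfl, by linear_combination h2⟩⟩
    · exact ⟨x, (evenClass_iff m _).mpr h1, Or.inr ⟨rfl, by linear_combination h2⟩⟩

lemma Eset1_eq (m k : ℕ) [NeZero (2*m)] :
    Eset1 (2*m) k = {q : ZMod (2*m) × ZMod (2*m) |
      phi m q.1 = 1 ∧ (q.2 - q.1 = (k : ZMod (2*m)) ∨ q.2 - q.1 = -(k : ZMod (2*m)))} := by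
  ext ⟨x, y⟩
  simp only [Eset1, Set.mem_setOf_eq, Prod.mk.injEq]
  constructor
  · rintro ⟨i, hi, (⟨rfl, rfl⟩ | ⟨rfl, rfl⟩)⟩
    · exact ⟨(oddClass_iff m _).mp hi, Or.inl (by ring)⟩
    · exact ⟨(oddClass_iff m _).mp hi, Or.inr (by ring)⟩
  · rintro ⟨h1, (h2 | h2)⟩
    · exact ⟨x, (oddClass_iff m _).mpr h1, Or.inl ⟨rfl, by linear_combination h2⟩⟩
    · exact ⟨x, (oddClass_iff m _).mpr h1, Or.inr ⟨rfl, by linear_combination h2⟩⟩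

/-- membership in the class of `p`, in terms of a chosen representative `k` of
the difference. -/
lemma mem_class_iff {m k : ℕ} [NeZero (2*m)] {p : ZMod (2*m) × ZMod (2*m)}
    (hk : (k : ZMod (2*m)) = p.2 - p.1 ∨ (k : ZMod (2*m)) = -(p.2 - p.1))
    (q : ZMod (2*m) × ZMod (2*m)) :
    (dihedral (2*m)).tensorTauEqv p q ↔
      ((q.2 - q.1 = (k : ZMod (2*m)) ∨ q.2 - q.1 = -(k : ZMod (2*m))) ∧
       (phi m (q.1 - p.1) = 0 ∨ phi m (q.1 - p.1) = (k : ZMod 2))) := by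
  rw [tauEqv_iff]
  have hdiff : ∀ x : ZMod (2*m),
      (x = p.2 - p.1 ∨ x = p.1 - p.2) ↔ (x = (k:ZMod (2*m)) ∨ x = -(k:ZMod (2*m))) := by
    intro x
    rcases hk with hk | hk
    · rw [hk]; constructor <;> rintro (h | h)
      · exact Or.inl h
      · exact Or.inr (by linear_combination h)
      · exact Or.inl h
      · exact Or.inr (by linear_combination h)
    · constructor <;> rintro (h | h)
      · exact Or.inr (by linear_combination h + hk)
      · exact Or.inl (by linear_combination h - hk)
      · exact Or.inr (by linear_combination h + hk)
      · exact Or.inl (by linear_combination h - hk)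
  have hphiD : ∀ x : ZMod (2*m), (x = (k:ZMod (2*m)) ∨ x = -(k:ZMod (2*m))) →
      phi m x = (k : ZMod 2) := by
    rintro x (rfl | rfl)
    · exact phi_nat m k
    · rw [map_neg, phi_nat, zmod2_neg]
  constructor
  · rintro (⟨h1, h2⟩ | ⟨h1, h2⟩)
    · exact ⟨(hdiff _).mp h2, Or.inl h1⟩
    · -- h1 : phi (q.2 - p.1) = 0, h2 : q.1 - q.2 = ± d
      simp only [Prod.fst_swap, Prod.snd_swap] at h1 h2
      have hd : q.1 - q.2 = (k:ZMod (2*m)) ∨ q.1 - q.2 = -(k:ZMod (2*m)) := (hdiff _).mp h2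
      have hD : q.2 - q.1 = (k:ZMod (2*m)) ∨ q.2 - q.1 = -(k:ZMod (2*m)) := by
        rcases hd with h | h
        · exact Or.inr (by linear_combination -h)
        · exact Or.inl (by linear_combination -h)
      refine ⟨hD, Or.inr ?_⟩
      have e : phi m (q.2 - p.1) = phi m (q.1 - p.1) + phi m (q.2 - q.1) := by
        rw [← map_add]; congr 1; ring
      rw [e, hphiD _ hD] at h1
      have := zmod2_cases (phi m (q.1 - p.1))
      rcases zmod2_cases ((k : ZMod 2)) with hk2 | hk2 <;> rw [hk2] at h1 ⊢ <;>
        rcases this with h' | h' <;> rw [h'] at h1 ⊢ <;> revert h1 <;> decide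
  · rintro ⟨hD, (h1 | h1)⟩
    · exact Or.inl ⟨h1, (hdiff _).mpr hD⟩
    · refine Or.inr ⟨?_, ?_⟩
      swap
      · show q.1 - q.2 = p.2 - p.1 ∨ q.1 - q.2 = p.1 - p.2
        refine (hdiff _).mpr ?_
        rcases hD with h | h
        · exact Or.inr (by linear_combination -h)
        · exact Or.inl (by linear_combination -h)
      show phi m (q.2 - p.1) = 0
      have e : phi m (q.2 - p.1) = phi m (q.1 - p.1) + phi m (q.2 - q.1) := by
        rw [← map_add]; congr 1; ring
      rw [e, hphiD _ hD, h1]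
      rcases zmod2_cases ((k:ZMod 2)) with hk2 | hk2 <;> rw [hk2] <;> decide

lemma nat_even_phi (k : ℕ) : Even k ↔ ((k : ZMod 2) = 0) := by
  rw [ZMod.natCast_eq_zero_iff]
  constructor
  · rintro ⟨b, rfl⟩; exact ⟨b, by ring⟩
  · rintro ⟨b, rfl⟩; exact ⟨b, by ring⟩

lemma class_eq_E0 {m k : ℕ} [NeZero (2*m)] {p : ZMod (2*m) × ZMod (2*m)}
    (hk : (k : ZMod (2*m)) = p.2 - p.1 ∨ (k : ZMod (2*m)) = -(p.2 - p.1))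
    (hke : Even k) (hp : phi m p.1 = 0) :
    {q | (dihedral (2*m)).tensorTauEqv p q} = Eset0 (2*m) k := by
  rw [Eset0_eq]
  ext q
  rw [Set.mem_setOf_eq, mem_class_iff hk, Set.mem_setOf_eq]
  rw [← (nat_even_phi k).mp hke]
  have e : phi m (q.1 - p.1) = phi m q.1 := by rw [map_sub, hp, sub_zero]
  rw [e, and_comm, or_self]

lemma class_eq_E1 {m k : ℕ} [NeZero (2*m)] {p : ZMod (2*m) × ZMod (2*m)}
    (hk : (k : ZMod (2*m)) = p.2 - p.1 ∨ (k : ZMod (2*m)) = -(p.2 - p.1))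
    (hke : Even k) (hp : phi m p.1 = 1) :
    {q | (dihedral (2*m)).tensorTauEqv p q} = Eset1 (2*m) k := by
  rw [Eset1_eq]
  ext q
  rw [Set.mem_setOf_eq, mem_class_iff hk, Set.mem_setOf_eq]
  rw [(nat_even_phi k).mp hke, or_self, and_comm]
  have e : phi m (q.1 - p.1) = 0 ↔ phi m q.1 = 1 := by
    rw [map_sub, hp]
    constructor
    · intro h
      rcases zmod2_cases (phi m q.1) with h' | h' <;> rw [h'] at h ⊢ <;> revert h <;> decide
    · intro h; rw [h]; decide
  rw [e]

lemma class_eq_union {m k : ℕ} [NeZero (2*m)] {p : ZMod (2*m) × ZMod (2*m)}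
    (hk : (k : ZMod (2*m)) = p.2 - p.1 ∨ (k : ZMod (2*m)) = -(p.2 - p.1))
    (hko : Odd k) :
    {q | (dihedral (2*m)).tensorTauEqv p q} = Eset0 (2*m) k ∪ Eset1 (2*m) k := by
  have hk2 : (k : ZMod 2) = 1 := by
    rcases zmod2_cases ((k:ZMod 2)) with h | h
    · exact absurd ((nat_even_phi k).mpr h) (Nat.not_even_iff_odd.mpr hko)
    · exact h
  rw [Eset0_eq, Eset1_eq]
  ext q
  rw [Set.mem_setOf_eq, mem_class_iff hk, Set.mem_union, Set.mem_setOf_eq, Set.mem_setOf_eq]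
  rw [hk2]
  constructor
  · rintro ⟨hD, h⟩
    rcases zmod2_cases (phi m q.1) with h' | h'
    · exact Or.inl ⟨h', hD⟩
    · exact Or.inr ⟨h', hD⟩
  · rintro (⟨h1, hD⟩ | ⟨h1, hD⟩) <;> refine ⟨hD, ?_⟩
    · rcases zmod2_cases (phi m (q.1 - p.1)) with h | h
      · exact Or.inl h
      · exact Or.inr h
    · rcases zmod2_cases (phi m (q.1 - p.1)) with h | h
      · exact Or.inl h
      · exact Or.inr h

/-- choosing a representative `k ≤ m` of a difference class -/
lemma exists_k (m : ℕ) [NeZero (2*m)] (d : ZMod (2*m)) :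
    ∃ k ≤ m, ((k : ZMod (2*m)) = d ∨ (k : ZMod (2*m)) = -d) := by
  have hv : d.val < 2*m := ZMod.val_lt d
  by_cases h : d.val ≤ m
  · exact ⟨d.val, h, Or.inl (ZMod.natCast_zmod_val d)⟩
  · refine ⟨2*m - d.val, by omega, Or.inr ?_⟩
    have h1 : ((2*m : ℕ) : ZMod (2*m)) = 0 := ZMod.natCast_self (2*m)
    rw [Nat.cast_sub hv.le, h1, ZMod.natCast_zmod_val, zero_sub]

end S6
namespace S6

lemma cast_eq_forcing {m k k' : ℕ} (hm : 1 ≤ m) (hk : k ≤ m) (hk' : k' ≤ m)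
    (h : (k : ZMod (2*m)) = (k' : ZMod (2*m)) ∨ (k : ZMod (2*m)) = -(k' : ZMod (2*m))) :
    k = k' := by
  haveI : NeZero (2*m) := ⟨by omega⟩
  rcases h with h | h
  · have h2 : k % (2*m) = k' % (2*m) := (ZMod.natCast_eq_natCast_iff k k' (2*m)).mp h
    rw [Nat.mod_eq_of_lt (by omega), Nat.mod_eq_of_lt (by omega)] at h2
    exact h2
  · have h0 : ((k + k' : ℕ) : ZMod (2*m)) = 0 := by push_cast; rw [h]; ring
    rw [ZMod.natCast_eq_zero_iff] at h0
    obtain ⟨c, hc⟩ := h0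
    rcases c with _ | _ | c
    · omega
    · omega
    · exfalso
      have : 2*m*2 ≤ 2*m*(c+1+1) := Nat.mul_le_mul_left _ (by omega)
      omega

lemma zero_k_mem_E0 (m k : ℕ) [NeZero (2*m)] :
    ((0 : ZMod (2*m)), (k : ZMod (2*m))) ∈ Eset0 (2*m) k := by
  rw [Eset0_eq]
  exact ⟨map_zero _, Or.inl (by show (k:ZMod (2*m)) - 0 = _; ring)⟩

lemma one_k_mem_E1 (m k : ℕ) [NeZero (2*m)] :
    ((1 : ZMod (2*m)), 1 + (k : ZMod (2*m))) ∈ Eset1 (2*m) k := by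
  rw [Eset1_eq]
  exact ⟨map_one _, Or.inl (by show 1 + (k:ZMod (2*m)) - 1 = _; ring)⟩

lemma eq_of_mem_E0 {m k k' : ℕ} (hm : 1 ≤ m) (hk : k ≤ m) (hk' : k' ≤ m)
    [NeZero (2*m)]
    (h : ((0 : ZMod (2*m)), (k : ZMod (2*m))) ∈ Eset0 (2*m) k') : k = k' := by
  rw [Eset0_eq] at h
  obtain ⟨-, h2⟩ := h
  apply cast_eq_forcing hm hk hk'
  rcases h2 with h2 | h2
  · exact Or.inl (by linear_combination h2)
  · exact Or.inr (by linear_combination h2)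

lemma eq_of_mem_E1 {m k k' : ℕ} (hm : 1 ≤ m) (hk : k ≤ m) (hk' : k' ≤ m)
    [NeZero (2*m)]
    (h : ((1 : ZMod (2*m)), 1 + (k : ZMod (2*m))) ∈ Eset1 (2*m) k') : k = k' := by
  rw [Eset1_eq] at h
  obtain ⟨-, h2⟩ := h
  apply cast_eq_forcing hm hk hk'
  rcases h2 with h2 | h2
  · exact Or.inl (by linear_combination h2)
  · exact Or.inr (by linear_combination h2)

lemma notMem_E1_zero {m k' : ℕ} [NeZero (2*m)] (x : ZMod (2*m)) :
    ((0 : ZMod (2*m)), x) ∉ Eset1 (2*m) k' := by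
  rw [Eset1_eq]
  rintro ⟨h, -⟩
  rw [map_zero] at h
  exact absurd h (by decide)

lemma notMem_E0_one {m k' : ℕ} [NeZero (2*m)] (x : ZMod (2*m)) :
    ((1 : ZMod (2*m)), x) ∉ Eset0 (2*m) k' := by
  rw [Eset0_eq]
  rintro ⟨h, -⟩
  rw [map_one] at h
  exact absurd h (by decide)

/-- Part 1: the set of classes. -/
lemma part1 (m : ℕ) (hm : 1 ≤ m) :
    ({S : Set (ZMod (2 * m) × ZMod (2 * m)) |
        ∃ p, S = {q | (dihedral (2 * m)).tensorTauEqv p q}} =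
      {S | ∃ k ≤ m,
        (Even k ∧ (S = Eset0 (2 * m) k ∨ S = Eset1 (2 * m) k)) ∨
        (Odd k ∧ S = Eset0 (2 * m) k ∪ Eset1 (2 * m) k)}) := by
  haveI : NeZero (2*m) := ⟨by omega⟩
  ext S
  simp only [Set.mem_setOf_eq]
  constructor
  · rintro ⟨p, rfl⟩
    obtain ⟨k, hkm, hk⟩ := exists_k m (p.2 - p.1)
    rcases Nat.even_or_odd k with he | ho
    · rcases zmod2_cases (phi m p.1) with hp | hp
      · exact ⟨k, hkm, Or.inl ⟨he, Or.inl (class_eq_E0 hk he hp)⟩⟩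
      · exact ⟨k, hkm, Or.inl ⟨he, Or.inr (class_eq_E1 hk he hp)⟩⟩
    · exact ⟨k, hkm, Or.inr ⟨ho, class_eq_union hk ho⟩⟩
  · rintro ⟨k, hkm, (⟨he, (rfl | rfl)⟩ | ⟨ho, rfl⟩)⟩
    · refine ⟨((0:ZMod (2*m)), (k:ZMod (2*m))), (class_eq_E0 ?_ he (map_zero _)).symm⟩
      exact Or.inl (by show (k:ZMod (2*m)) = (k:ZMod (2*m)) - 0; ring)
    · refine ⟨((1:ZMod (2*m)), 1 + (k:ZMod (2*m))), (class_eq_E1 ?_ he (map_one _)).symm⟩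
      exact Or.inl (by show (k:ZMod (2*m)) = (1 + (k:ZMod (2*m))) - 1; ring)
    · refine ⟨((0:ZMod (2*m)), (k:ZMod (2*m))), (class_eq_union ?_ ho).symm⟩
      exact Or.inl (by show (k:ZMod (2*m)) = (k:ZMod (2*m)) - 0; ring)

end S6
namespace S6

/-- enumeration function for the classes -/
def hfun (m : ℕ) (x : ℕ × Bool) : Set (ZMod (2*m) × ZMod (2*m)) :=
  if Even x.1 then (if x.2 then Eset0 (2*m) x.1 else Eset1 (2*m) x.1)
  else Eset0 (2*m) x.1 ∪ Eset1 (2*m) x.1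

/-- index set -/
def Tset (m : ℕ) : Finset (ℕ × Bool) :=
  (Finset.range (m+1) ×ˢ (Finset.univ : Finset Bool)).filter (fun x => Even x.1 ∨ x.2 = true)

lemma mem_Tset (m : ℕ) (x : ℕ × Bool) :
    x ∈ Tset m ↔ x.1 ≤ m ∧ (Even x.1 ∨ x.2 = true) := by
  simp [Tset, Finset.mem_filter, Finset.mem_product, Finset.mem_range, Nat.lt_succ_iff]

lemma hfun_inj {m : ℕ} (hm : 1 ≤ m) {k k' : ℕ} {b b' : Bool}
    (hk : k ≤ m) (hk' : k' ≤ m) (hb : Even k ∨ b = true) (hb' : Even k' ∨ b' = true)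
    (h : hfun m (k, b) = hfun m (k', b')) : k = k' ∧ b = b' := by
  haveI : NeZero (2*m) := ⟨by omega⟩
  by_cases ek : Even k <;> by_cases ek' : Even k'
  · cases b <;> cases b' <;> simp only [hfun, if_pos ek, if_pos ek'] at h <;>
      simp only [Bool.false_eq_true, if_false, if_true] at h
    · exact ⟨eq_of_mem_E1 hm hk hk' (h ▸ one_k_mem_E1 m k), rfl⟩
    · exact absurd (h ▸ one_k_mem_E1 m k) (notMem_E0_one _)
    · exact absurd (h ▸ zero_k_mem_E0 m k) (notMem_E1_zero _)
    · exact ⟨eq_of_mem_E0 hm hk hk' (h ▸ zero_k_mem_E0 m k), rfl⟩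
  · exfalso
    have hkk' : k = k' := by
      rcases b with _ | _
      · rcases hb with hb | hb
        · simp only [hfun, if_pos ek, if_neg ek', Bool.false_eq_true, if_false] at h
          rcases (h ▸ one_k_mem_E1 m k : _ ∈ Eset0 (2*m) k' ∪ Eset1 (2*m) k') with h' | h'
          · exact absurd h' (notMem_E0_one _)
          · exact eq_of_mem_E1 hm hk hk' h'
        · exact absurd hb (by decide)
      · simp only [hfun, if_pos ek, if_neg ek', if_true] at h
        rcases (h ▸ zero_k_mem_E0 m k : _ ∈ Eset0 (2*m) k' ∪ Eset1 (2*m) k') with h' | h'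
        · exact eq_of_mem_E0 hm hk hk' h'
        · exact absurd h' (notMem_E1_zero _)
    exact ek' (hkk' ▸ ek)
  · exfalso
    have hkk' : k' = k := by
      rcases b' with _ | _
      · rcases hb' with hb' | hb'
        · simp only [hfun, if_pos ek', if_neg ek, Bool.false_eq_true, if_false] at h
          rcases (h.symm ▸ one_k_mem_E1 m k' : _ ∈ Eset0 (2*m) k ∪ Eset1 (2*m) k) with h' | h'
          · exact absurd h' (notMem_E0_one _)
          · exact eq_of_mem_E1 hm hk' hk h'
        · exact absurd hb' (by decide)
      · simp only [hfun, if_pos ek', if_neg ek, if_true] at h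
        rcases (h.symm ▸ zero_k_mem_E0 m k' : _ ∈ Eset0 (2*m) k ∪ Eset1 (2*m) k) with h' | h'
        · exact eq_of_mem_E0 hm hk' hk h'
        · exact absurd h' (notMem_E1_zero _)
    exact ek (hkk' ▸ ek')
  · have hbt : b = true := hb.resolve_left ek
    have hbt' : b' = true := hb'.resolve_left ek'
    subst hbt; subst hbt'
    refine ⟨?_, rfl⟩
    simp only [hfun, if_neg ek, if_neg ek'] at h
    rcases (h ▸ Set.mem_union_left _ (zero_k_mem_E0 m k) :
        _ ∈ Eset0 (2*m) k' ∪ Eset1 (2*m) k') with h' | h'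
    · exact eq_of_mem_E0 hm hk hk' h'
    · exact absurd h' (notMem_E1_zero _)

lemma sum_aux (N : ℕ) :
    (∑ k ∈ Finset.range N, (1 + if Even k then 1 else 0)) = N + (N+1)/2 := by
  induction N with
  | zero => simp
  | succ n ih =>
    rw [Finset.sum_range_succ, ih]
    rcases Nat.even_or_odd n with h | h
    · rw [if_pos h]
      obtain ⟨j, rfl⟩ := h
      omega
    · rw [if_neg (Nat.not_even_iff_odd.mpr h)]
      obtain ⟨j, rfl⟩ := h
      omega

lemma Tcard (m : ℕ) : (Tset m).card = (m+1) + (m+2)/2 := by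
  rw [Tset, Finset.card_filter, Finset.sum_product]
  have : ∀ k : ℕ, (∑ b ∈ (Finset.univ : Finset Bool),
      (if Even (k, b).1 ∨ (k, b).2 = true then 1 else 0)) = 1 + if Even k then 1 else 0 := by
    intro k
    rw [Fintype.sum_bool]
    by_cases h : Even k
    · simp [h]
    · simp [h]
  rw [Finset.sum_congr rfl (fun k _ => this k), sum_aux]

end S6
namespace S6

open scoped Classical

lemma E_eq_image (m : ℕ) (hm : 1 ≤ m) :
    {S : Set (ZMod (2*m) × ZMod (2*m)) | ∃ k ≤ m,
        (Even k ∧ (S = Eset0 (2 * m) k ∨ S = Eset1 (2 * m) k)) ∨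
        (Odd k ∧ S = Eset0 (2 * m) k ∪ Eset1 (2 * m) k)} =
      ↑((Tset m).image (hfun m)) := by
  ext S
  simp only [Set.mem_setOf_eq, Finset.coe_image, Set.mem_image, Finset.mem_coe]
  constructor
  · rintro ⟨k, hkm, (⟨he, (rfl | rfl)⟩ | ⟨ho, rfl⟩)⟩
    · exact ⟨(k, true), (mem_Tset m _).mpr ⟨hkm, Or.inl he⟩, by simp [hfun, he]⟩
    · exact ⟨(k, false), (mem_Tset m _).mpr ⟨hkm, Or.inl he⟩, by simp [hfun, he]⟩
    · exact ⟨(k, true), (mem_Tset m _).mpr ⟨hkm, Or.inr rfl⟩,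
        by simp [hfun, Nat.not_even_iff_odd.mpr ho]⟩
  · rintro ⟨⟨k, b⟩, hmem, rfl⟩
    obtain ⟨hkm, hb⟩ := (mem_Tset m _).mp hmem
    by_cases he : Even k
    · cases b
      · exact ⟨k, hkm, Or.inl ⟨he, Or.inr (by simp [hfun, he])⟩⟩
      · exact ⟨k, hkm, Or.inl ⟨he, Or.inl (by simp [hfun, he])⟩⟩
    · exact ⟨k, hkm, Or.inr ⟨Nat.not_even_iff_odd.mp he, by simp [hfun, he]⟩⟩

lemma part2 (m : ℕ) (hm : 1 ≤ m) :
    Nat.card ((dihedral (2 * m)).TensorTau) = (m+1) + (m+2)/2 := by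
  haveI : NeZero (2*m) := ⟨by omega⟩
  have hsound : ∀ (a b : ZMod (2*m) × ZMod (2*m)), (dihedral (2*m)).tensorTauEqv a b →
      {q | (dihedral (2*m)).tensorTauEqv a q} = {q | (dihedral (2*m)).tensorTauEqv b q} := by
    intro a b hab
    ext q
    exact ⟨fun h => Relation.EqvGen.trans _ _ _ (Relation.EqvGen.symm _ _ hab) h,
      fun h => Relation.EqvGen.trans _ _ _ hab h⟩
  let f : (dihedral (2*m)).TensorTau → Set (ZMod (2*m) × ZMod (2*m)) :=
    Quotient.lift (fun p => {q | (dihedral (2*m)).tensorTauEqv p q}) hsound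
  have finj : Function.Injective f := by
    intro a b
    refine Quotient.inductionOn₂ a b ?_
    intro p p' h
    have h' : {q | (dihedral (2*m)).tensorTauEqv p q} =
        {q | (dihedral (2*m)).tensorTauEqv p' q} := h
    apply Quotient.sound
    show (dihedral (2*m)).tensorTauEqv p p'
    have : p' ∈ {q | (dihedral (2*m)).tensorTauEqv p' q} := Relation.EqvGen.refl p'
    rw [← h'] at this
    exact this
  have hrange : Set.range f = {S : Set (ZMod (2*m) × ZMod (2*m)) |
      ∃ p, S = {q | (dihedral (2*m)).tensorTauEqv p q}} := by
    ext S
    constructor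
    · rintro ⟨a, rfl⟩
      refine Quotient.inductionOn a ?_
      intro p
      exact ⟨p, rfl⟩
    · rintro ⟨p, rfl⟩
      exact ⟨Quotient.mk _ p, rfl⟩
  have h1 : Nat.card ((dihedral (2*m)).TensorTau) = Nat.card (Set.range f) :=
    (Nat.card_range_of_injective finj).symm
  rw [h1, hrange, part1 m hm, E_eq_image m hm]
  rw [Nat.card_coe_set_eq, Set.ncard_coe_finset]
  rw [Finset.card_image_of_injOn, Tcard]
  rintro ⟨k, b⟩ hkb ⟨k', b'⟩ hkb' h
  rw [Finset.mem_coe, mem_Tset] at hkb hkb'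
  obtain ⟨e1, e2⟩ := hfun_inj hm hkb.1 hkb'.1 hkb.2 hkb'.2 h
  exact Prod.ext e1 e2

end S6
/-- for `n = 2m` with `m ≥ 1`, the quotient `R_n ⊗ R_n / ⟨τ⟩` has
exactly `3(m+1)/2` elements if `m` is odd and `3m/2 + 2` elements if `m` is even;
its elements are `E(k)₀` and `E(k)₁` for even `k ≤ m`, and `E(k)₀ ∪ E(k)₁` for odd
`k ≤ m`. -/
theorem statement6 (m : ℕ) (hm : 1 ≤ m) :
    ({S : Set (ZMod (2 * m) × ZMod (2 * m)) |
        ∃ p, S = {q | (dihedral (2 * m)).tensorTauEqv p q}} =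
      {S | ∃ k ≤ m,
        (Even k ∧ (S = Eset0 (2 * m) k ∨ S = Eset1 (2 * m) k)) ∨
        (Odd k ∧ S = Eset0 (2 * m) k ∪ Eset1 (2 * m) k)}) ∧
    Nat.card ((dihedral (2 * m)).TensorTau) =
      (if Odd m then 3 * (m + 1) / 2 else 3 * m / 2 + 2) := by
  refine ⟨S6.part1 m hm, ?_⟩
  rw [S6.part2 m hm]
  rcases Nat.even_or_odd m with ⟨j, rfl⟩ | ⟨j, rfl⟩
  · rw [if_neg (Nat.not_odd_iff_even.mpr ⟨j, rfl⟩)]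
    omega
  · rw [if_pos ⟨j, rfl⟩]
    omega
end

section
/- Let n = 2m+1 and let R_n be the dihedral quandle of order n, and let k ∈ {0, 1, …, m}. If x, y ∈ R_n satisfy d_n(x, y) = k, then (x, y) is equivalent to (0, k) under the relation ≈ defining R_n ⊗ R_n; equivalently, there exists g in the free group F(R_n) with x · g = 0 and y · g = k under the canonical right action. -/
namespace QuandleStr

variable {X : Type} (Q : QuandleStr X)

/-- Right translation by `y`, `x ↦ x ∗ y`, as a bijection of `X`. -/
def opPerm (y : X) : Equiv.Perm X where
  toFun x := Q.op x y
  invFun x := Q.inv x y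
  left_inv x := Q.q2a x y
  right_inv x := Q.q2b x y

/-- The canonical right action of the free group `F(X)` on `X`, encoded as a
group homomorphism to the opposite of the permutation group of `X`, so that
`x · y = x ∗ y` and `x · y⁻¹ = x ∗̄ y` for generators `y ∈ X`. -/
def actHom : FreeGroup X →* (Equiv.Perm X)ᵐᵒᵖ :=
  FreeGroup.lift (fun y => MulOpposite.op (Q.opPerm y))

/-- `x · g`: the canonical right action of `g ∈ F(X)` on `x ∈ X`. -/
def act (x : X) (g : FreeGroup X) : X :=
  (Q.actHom g).unop x

end QuandleStr

lemma act_of {X : Type} (Q : QuandleStr X) (x z : X) :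
    Q.act x (FreeGroup.of z) = Q.op x z := by
  simp [QuandleStr.act, QuandleStr.actHom, QuandleStr.opPerm]

lemma act_mul {X : Type} (Q : QuandleStr X) (x : X) (g h : FreeGroup X) :
    Q.act x (g * h) = Q.act (Q.act x g) h := by
  simp [QuandleStr.act, map_mul]

lemma two_mul_succ (m : ℕ) (c : ZMod (2 * m + 1)) :
    2 * (((m : ZMod (2 * m + 1)) + 1) * c) = c := by
  have h : ((2 * m + 1 : ℕ) : ZMod (2 * m + 1)) = 0 := ZMod.natCast_self _
  push_cast at h
  linear_combination c * h

lemma ddist_cases (m k : ℕ) (x y : ZMod (2 * m + 1))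
    (hd : ddist (2 * m + 1) x y = k) :
    x - y = (k : ZMod (2 * m + 1)) ∨ y - x = (k : ZMod (2 * m + 1)) := by
  have hne : {d : ℕ | ∃ a b : ℤ, (a : ZMod (2 * m + 1)) = x ∧
      (b : ZMod (2 * m + 1)) = y ∧ (a - b).natAbs = d}.Nonempty := by
    refine ⟨((x.val : ℤ) - (y.val : ℤ)).natAbs, (x.val : ℤ), (y.val : ℤ), ?_, ?_, rfl⟩
    · push_cast; simp [ZMod.natCast_val, ZMod.cast_id]
    · push_cast; simp [ZMod.natCast_val, ZMod.cast_id]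
  have hmem := Nat.sInf_mem hne
  rw [show sInf _ = ddist (2 * m + 1) x y from rfl, hd] at hmem
  obtain ⟨a, b, ha, hb, hab⟩ := hmem
  rcases Int.natAbs_eq (a - b) with h | h
  · left
    rw [← ha, ← hb, ← Int.cast_sub, h, hab]
    push_cast; ring
  · right
    have h' : b - a = ((a - b).natAbs : ℤ) := by omega
    rw [← ha, ← hb, ← Int.cast_sub, h', hab]
    push_cast; ring

/-- for `n = 2m+1` and `k ≤ m`, if `d_n(x, y) = k` then `(x, y) ≈ (0, k)`;
equivalently there is `g ∈ F(R_n)` with `x · g = 0` and `y · g = k`. -/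
theorem statement7 (m k : ℕ) (hk : k ≤ m) (x y : ZMod (2 * m + 1))
    (hd : ddist (2 * m + 1) x y = k) :
    (dihedral (2 * m + 1)).tensorEqv (x, y) (0, (k : ZMod (2 * m + 1))) ∧
    ∃ g : FreeGroup (ZMod (2 * m + 1)),
      (dihedral (2 * m + 1)).act x g = 0 ∧
      (dihedral (2 * m + 1)).act y g = (k : ZMod (2 * m + 1)) := by
  have hop : ∀ a z : ZMod (2 * m + 1), (dihedral (2 * m + 1)).op a z = 2 * z - a := fun _ _ => rfl
  rcases ddist_cases m k x y hd with h | h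
  · -- x - y = k : one step with z = (m+1)*x
    set z : ZMod (2 * m + 1) := ((m : ZMod (2 * m + 1)) + 1) * x with hz
    have h2 : 2 * z = x := two_mul_succ m x
    have hx : (dihedral (2 * m + 1)).op x z = 0 := by rw [hop, h2]; ring
    have hy : (dihedral (2 * m + 1)).op y z = (k : ZMod (2 * m + 1)) := by rw [hop, h2]; linear_combination h
    constructor
    · exact Relation.EqvGen.rel _ _ ⟨z, by simp [hx, hy]⟩
    · exact ⟨FreeGroup.of z, by rw [act_of, hx], by rw [act_of, hy]⟩
  · -- y - x = k : two steps, z₁ = 0 and z₂ = (m+1)*(-x)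
    set z : ZMod (2 * m + 1) := ((m : ZMod (2 * m + 1)) + 1) * (-x) with hz
    have h2 : 2 * z = -x := two_mul_succ m (-x)
    have hx1 : (dihedral (2 * m + 1)).op x 0 = -x := by rw [hop]; ring
    have hy1 : (dihedral (2 * m + 1)).op y 0 = -y := by rw [hop]; ring
    have hx2 : (dihedral (2 * m + 1)).op (-x) z = 0 := by rw [hop, h2]; ring
    have hy2 : (dihedral (2 * m + 1)).op (-y) z = (k : ZMod (2 * m + 1)) := by rw [hop, h2]; linear_combination h
    constructor
    · refine Relation.EqvGen.trans _ (-x, -y) _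
        (Relation.EqvGen.rel _ _ ⟨0, by simp [hx1, hy1]⟩)
        (Relation.EqvGen.rel _ _ ⟨z, by simp [hx2, hy2]⟩)
    · refine ⟨FreeGroup.of 0 * FreeGroup.of z, ?_, ?_⟩
      · rw [act_mul, act_of, act_of, hx1, hx2]
      · rw [act_mul, act_of, act_of, hy1, hy2]
end

section
/- Let n = 2m+1, let R_n be the dihedral quandle of order n, and let D(R_n) be its symmetric double. Two pairs (x^ε, y^δ), (x'^{ε'}, y'^{δ'}) ∈ D(R_n) × D(R_n) are equivalent under the relation defining D(R_n) ⊗ D(R_n) if and only if ε = ε', δ = δ', and d_n(x, y) = d_n(x', y'). Consequently D(R_n) ⊗ D(R_n) consists of exactly 4(m+1) = 2n+2 elements, namely the sets E(k)^{ε,δ} = {(i, i+k)^{ε,δ}, (i, i−k)^{ε,δ} : i ∈ ℤ/nℤ} for k = 0, 1, …, m and ε, δ ∈ {+,−}. -/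
/-- `E(k)^{ε,δ} = {(i, i+k)^{ε,δ}, (i, i−k)^{ε,δ} : i ∈ ℤ/nℤ}`. -/
def EsetD (n k : ℕ) (ε δ : Bool) : Set ((ZMod n × Bool) × (ZMod n × Bool)) :=
  {p | ∃ i : ZMod n,
    p = ((i, ε), (i + (k : ZMod n), δ)) ∨ p = ((i, ε), (i - (k : ZMod n), δ))}

section Aux10

/-- The set of absolute values of integer representatives of `d`. -/
def Dset (n : ℕ) (d : ZMod n) : Set ℕ :=
  {k | ∃ c : ℤ, (c : ZMod n) = d ∧ c.natAbs = k}

lemma mem_Dset_val {n : ℕ} [NeZero n] (d : ZMod n) : d.val ∈ Dset n d :=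
  ⟨(d.val : ℤ), by rw [Int.cast_natCast, ZMod.natCast_val, ZMod.cast_id],
    Int.natAbs_natCast _⟩

lemma Dset_nonempty {n : ℕ} [NeZero n] (d : ZMod n) : (Dset n d).Nonempty :=
  ⟨_, mem_Dset_val d⟩

lemma ddist_eq {n : ℕ} [NeZero n] (x y : ZMod n) :
    ddist n x y = sInf (Dset n (x - y)) := by
  unfold ddist Dset
  congr 1
  ext k
  constructor
  · rintro ⟨a, b, ha, hb, rfl⟩
    exact ⟨a - b, by push_cast [ha, hb]; ring, rfl⟩
  · rintro ⟨c, hc, rfl⟩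
    refine ⟨c + (y.val : ℤ), (y.val : ℤ), ?_, ?_, by simp⟩
    · push_cast [hc, ZMod.natCast_val, ZMod.cast_id]
      ring
    · simp [ZMod.natCast_val, ZMod.cast_id]

lemma Dset_neg {n : ℕ} (d : ZMod n) : Dset n (-d) = Dset n d := by
  ext k
  constructor
  · rintro ⟨c, hc, rfl⟩
    exact ⟨-c, by rw [Int.cast_neg, hc, neg_neg], Int.natAbs_neg c⟩
  · rintro ⟨c, hc, rfl⟩
    exact ⟨-c, by rw [Int.cast_neg, hc], Int.natAbs_neg c⟩

lemma D_inj {n : ℕ} [NeZero n] {d d' : ZMod n}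
    (h : sInf (Dset n d) = sInf (Dset n d')) : d = d' ∨ d = -d' := by
  obtain ⟨c, hc, hck⟩ := Nat.sInf_mem (Dset_nonempty d)
  obtain ⟨c', hc', hck'⟩ := Nat.sInf_mem (Dset_nonempty d')
  have habs : c.natAbs = c'.natAbs := by rw [hck, hck', h]
  rcases Int.natAbs_eq_natAbs_iff.mp habs with h1 | h1
  · left; rw [← hc, ← hc', h1]
  · right; rw [← hc, ← hc', h1, Int.cast_neg]

lemma D_natCast (m k : ℕ) (hk : k ≤ m) :
    sInf (Dset (2 * m + 1) ((k : ZMod (2 * m + 1)))) = k := by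
  have hmem : k ∈ Dset (2 * m + 1) ((k : ZMod (2 * m + 1))) :=
    ⟨(k : ℤ), by push_cast; ring, Int.natAbs_natCast k⟩
  refine le_antisymm (Nat.sInf_le hmem) (le_csInf (Dset_nonempty _) ?_)
  rintro j ⟨c, hc, rfl⟩
  have hcast : ((c : ℤ) : ZMod (2 * m + 1)) = (((k : ℤ)) : ZMod (2 * m + 1)) := by
    rw [hc]; push_cast; ring
  have hmod := (ZMod.intCast_eq_intCast_iff _ _ _).mp hcast
  obtain ⟨t, ht⟩ := hmod.dvd
  have hkc : (k : ℤ) - c = (2 * m + 1 : ℕ) * t := ht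
  push_cast at hkc
  have hineq : (2 * (m : ℤ) + 1) * t = 0 ∨ (2 * (m : ℤ) + 1) * t ≥ 2 * m + 1 ∨
      (2 * (m : ℤ) + 1) * t ≤ -(2 * m + 1) := by
    rcases lt_trichotomy t 0 with ht' | ht' | ht'
    · right; right; nlinarith
    · left; rw [ht', mul_zero]
    · right; left; nlinarith
  omega

lemma D_le (m : ℕ) (d : ZMod (2 * m + 1)) : sInf (Dset (2 * m + 1) d) ≤ m := by
  rcases le_or_gt d.val m with h | h
  · exact le_trans (Nat.sInf_le (mem_Dset_val d)) h
  · have hv : d.val < 2 * m + 1 := ZMod.val_lt d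
    have hmem : (2 * m + 1 - d.val) ∈ Dset (2 * m + 1) d := by
      refine ⟨(d.val : ℤ) - ((2 * m + 1 : ℕ) : ℤ), ?_, by omega⟩
      rw [Int.cast_sub, Int.cast_natCast, Int.cast_natCast, ZMod.natCast_self,
        ZMod.natCast_val, ZMod.cast_id, sub_zero]
    exact le_trans (Nat.sInf_le hmem) (by omega)

lemma ddist_le (m : ℕ) (x y : ZMod (2 * m + 1)) : ddist (2 * m + 1) x y ≤ m := by
  rw [ddist_eq]; exact D_le m _

lemma ddist_eq_iff (m : ℕ) (x y : ZMod (2 * m + 1)) (k : ℕ) (hk : k ≤ m) :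
    ddist (2 * m + 1) x y = k ↔
      (x - y = (k : ZMod (2 * m + 1)) ∨ x - y = -(k : ZMod (2 * m + 1))) := by
  rw [ddist_eq]
  constructor
  · intro h
    have h2 : sInf (Dset (2 * m + 1) (x - y))
        = sInf (Dset (2 * m + 1) ((k : ZMod (2 * m + 1)))) := by
      rw [h, D_natCast m k hk]
    exact D_inj h2
  · rintro (h | h) <;> rw [h]
    · exact D_natCast m k hk
    · rw [show (-(k : ZMod (2 * m + 1))) = -((k : ZMod (2 * m + 1))) from rfl, Dset_neg]
      exact D_natCast m k hk

lemma eqv_invariant (m : ℕ)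
    {p q : (ZMod (2 * m + 1) × Bool) × (ZMod (2 * m + 1) × Bool)}
    (h : ((dihedral (2 * m + 1)).double).tensorEqv p q) :
    p.1.2 = q.1.2 ∧ p.2.2 = q.2.2 ∧
      ddist (2 * m + 1) p.1.1 p.2.1 = ddist (2 * m + 1) q.1.1 q.2.1 := by
  induction h with
  | rel a b hab =>
      obtain ⟨⟨z, γ⟩, rfl⟩ := hab
      refine ⟨rfl, rfl, ?_⟩
      have hb1 : (((dihedral (2 * m + 1)).double).op a.1 (z, γ)).1 = 2 * z - a.1.1 := by
        cases γ <;> rfl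
      have hb2 : (((dihedral (2 * m + 1)).double).op a.2 (z, γ)).1 = 2 * z - a.2.1 := by
        cases γ <;> rfl
      rw [hb1, hb2, ddist_eq, ddist_eq,
        show (2 * z - a.1.1) - (2 * z - a.2.1) = -(a.1.1 - a.2.1) by ring, Dset_neg]
  | refl a => exact ⟨rfl, rfl, rfl⟩
  | symm a b _ ih => exact ⟨ih.1.symm, ih.2.1.symm, ih.2.2.symm⟩
  | trans a b c _ _ ih1 ih2 =>
      exact ⟨ih1.1.trans ih2.1, ih1.2.1.trans ih2.2.1, ih1.2.2.trans ih2.2.2⟩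

lemma step_rel' (m : ℕ) (x y a b z : ZMod (2 * m + 1)) (ε δ : Bool)
    (ha : a = 2 * z - x) (hb : b = 2 * z - y) :
    ((dihedral (2 * m + 1)).double).tensorStep ((x, ε), (y, δ)) ((a, ε), (b, δ)) :=
  ⟨(z, true), by rw [ha, hb]; rfl⟩

lemma two_mul_inv (m : ℕ) : (2 : ZMod (2 * m + 1)) * ((m + 1 : ℕ) : ZMod (2 * m + 1)) = 1 := by
  have h := ZMod.natCast_self (2 * m + 1)
  push_cast at h ⊢
  linear_combination h

lemma eqv_of_diff (m : ℕ) (x y x' y' : ZMod (2 * m + 1)) (ε δ : Bool)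
    (h : x - y = x' - y' ∨ x - y = -(x' - y')) :
    ((dihedral (2 * m + 1)).double).tensorEqv ((x, ε), (y, δ)) ((x', ε), (y', δ)) := by
  have h2 := two_mul_inv m
  set c : ZMod (2 * m + 1) := ((m + 1 : ℕ) : ZMod (2 * m + 1)) with hc
  rcases h with h | h
  · refine Relation.EqvGen.trans _ ((-x, ε), (-y, δ)) _
      (Relation.EqvGen.rel _ _ (step_rel' m x y (-x) (-y) 0 ε δ (by ring) (by ring)))
      (Relation.EqvGen.rel _ _ (step_rel' m (-x) (-y) x' y' (c * (x' - x)) ε δ ?_ ?_))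
    · linear_combination (x - x') * h2
    · linear_combination (x - x') * h2 + h
  · exact Relation.EqvGen.rel _ _
      (step_rel' m x y x' y' (c * (x + x')) ε δ
        (by linear_combination (-x - x') * h2)
        (by linear_combination (-x - x') * h2 - h))

lemma part1 (m : ℕ) (x y x' y' : ZMod (2 * m + 1)) (ε δ ε' δ' : Bool) :
    ((dihedral (2 * m + 1)).double).tensorEqv ((x, ε), (y, δ)) ((x', ε'), (y', δ')) ↔
      ε = ε' ∧ δ = δ' ∧ ddist (2 * m + 1) x y = ddist (2 * m + 1) x' y' := by
  constructor
  · intro h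
    exact eqv_invariant m h
  · rintro ⟨rfl, rfl, h⟩
    apply eqv_of_diff
    rw [ddist_eq, ddist_eq] at h
    exact D_inj h

lemma class_eq (m : ℕ) (x y : ZMod (2 * m + 1)) (ε δ : Bool) :
    {q | ((dihedral (2 * m + 1)).double).tensorEqv ((x, ε), (y, δ)) q}
      = EsetD (2 * m + 1) (ddist (2 * m + 1) x y) ε δ := by
  set k := ddist (2 * m + 1) x y with hkdef
  have hk : k ≤ m := ddist_le m x y
  ext ⟨⟨x', ε'⟩, ⟨y', δ'⟩⟩
  rw [Set.mem_setOf_eq, part1]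
  simp only [EsetD, Set.mem_setOf_eq]
  constructor
  · rintro ⟨rfl, rfl, h⟩
    have h' : x' - y' = (k : ZMod (2 * m + 1)) ∨ x' - y' = -(k : ZMod (2 * m + 1)) :=
      (ddist_eq_iff m x' y' k hk).mp h.symm
    refine ⟨x', ?_⟩
    rcases h' with h' | h'
    · exact Or.inr (by rw [show x' - (k : ZMod (2 * m + 1)) = y' by linear_combination h'])
    · exact Or.inl (by rw [show x' + (k : ZMod (2 * m + 1)) = y' by linear_combination h'])
  · rintro ⟨i, h | h⟩ <;> simp only [Prod.mk.injEq] at h <;>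
      obtain ⟨⟨rfl, rfl⟩, rfl, rfl⟩ := h
    · exact ⟨rfl, rfl, ((ddist_eq_iff m _ _ k hk).mpr (Or.inr (by ring))).symm⟩
    · exact ⟨rfl, rfl, ((ddist_eq_iff m _ _ k hk).mpr (Or.inl (by ring))).symm⟩

lemma ddist_zero_nat (m k : ℕ) (hk : k ≤ m) :
    ddist (2 * m + 1) 0 ((k : ZMod (2 * m + 1))) = k :=
  (ddist_eq_iff m 0 _ k hk).mpr (Or.inr (by ring))

noncomputable def tensorEquiv (m : ℕ) :
    ((dihedral (2 * m + 1)).double).Tensor ≃ Bool × Bool × Fin (m + 1) where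
  toFun := Quotient.lift
    (fun p => (p.1.2, p.2.2,
      (⟨ddist (2 * m + 1) p.1.1 p.2.1, Nat.lt_succ_of_le (ddist_le m _ _)⟩ : Fin (m + 1))))
    (by
      intro a b hab
      obtain ⟨h1, h2, h3⟩ := eqv_invariant m hab
      simp only [Prod.mk.injEq, Fin.mk.injEq]
      exact ⟨h1, h2, h3⟩)
  invFun := fun t => Quotient.mk (Relation.EqvGen.setoid _)
    ((0, t.1), (((t.2.2 : ℕ) : ZMod (2 * m + 1)), t.2.1))
  left_inv := by
    apply Quotient.ind
    rintro ⟨⟨x, ε⟩, ⟨y, δ⟩⟩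
    apply Quotient.sound
    show ((dihedral (2 * m + 1)).double).tensorEqv _ _
    rw [part1]
    exact ⟨rfl, rfl, ddist_zero_nat m _ (ddist_le m x y)⟩
  right_inv := by
    rintro ⟨ε, δ, k⟩
    have hd : ddist (2 * m + 1) 0 ((k.val : ZMod (2 * m + 1))) = k.val :=
      ddist_zero_nat m k.val (Nat.lt_succ_iff.mp k.isLt)
    simp only [Quotient.lift_mk, Prod.mk.injEq, hd, Fin.eta]

end Aux10

/-- for `n = 2m+1`, two pairs `((x, ε), (y, δ))`, `((x', ε'), (y', δ'))`
are equivalent in `D(R_n) × D(R_n)` iff `ε = ε'`, `δ = δ'` and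
`d_n(x, y) = d_n(x', y')`; consequently `D(R_n) ⊗ D(R_n)` consists of exactly
`4(m+1) = 2n+2` elements, the sets `E(k)^{ε,δ}` for `k = 0, …, m` and `ε, δ`. -/
theorem statement10 (m : ℕ) :
    (∀ (x y x' y' : ZMod (2 * m + 1)) (ε δ ε' δ' : Bool),
      ((dihedral (2 * m + 1)).double).tensorEqv ((x, ε), (y, δ)) ((x', ε'), (y', δ')) ↔
        ε = ε' ∧ δ = δ' ∧ ddist (2 * m + 1) x y = ddist (2 * m + 1) x' y') ∧
    ({S : Set ((ZMod (2 * m + 1) × Bool) × (ZMod (2 * m + 1) × Bool)) |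
        ∃ p, S = {q | ((dihedral (2 * m + 1)).double).tensorEqv p q}} =
      {S | ∃ k ≤ m, ∃ ε δ : Bool, S = EsetD (2 * m + 1) k ε δ}) ∧
    Nat.card (((dihedral (2 * m + 1)).double).Tensor) = 4 * (m + 1) := by
  refine ⟨part1 m, ?_, ?_⟩
  · ext S
    simp only [Set.mem_setOf_eq]
    constructor
    · rintro ⟨⟨⟨x, ε⟩, ⟨y, δ⟩⟩, rfl⟩
      exact ⟨ddist (2 * m + 1) x y, ddist_le m x y, ε, δ, class_eq m x y ε δ⟩
    · rintro ⟨k, hk, ε, δ, rfl⟩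
      refine ⟨((0, ε), (((k : ZMod (2 * m + 1))), δ)), ?_⟩
      rw [class_eq m 0 _ ε δ, ddist_zero_nat m k hk]
  · rw [Nat.card_congr (tensorEquiv m)]
    simp [Nat.card_eq_fintype_card]
    ring
end

section
/- Let n = 2m+1, let R_n be the dihedral quandle of order n, and let D(R_n) be its symmetric double with the good involution ρ exchanging x⁺ and x⁻. The quotient set D(R_n) ⊗ D(R_n) / ⟨ρ⟩ has exactly 2(m+1) = n+1 elements, namely {E(k)^{+,+}, E(k)^{−,−}} and {E(k)^{+,−}, E(k)^{−,+}} for k = 0, 1, …, m, where E(k)^{ε,δ} = {(i, i+k)^{ε,δ}, (i, i−k)^{ε,δ} : i ∈ ℤ/nℤ}. -/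
namespace St12

variable {m : ℕ}

/-- The generating relation of `TensorRho` for the double of the dihedral quandle. -/
abbrev R (m : ℕ) : (ZMod (2*m+1) × Bool) × (ZMod (2*m+1) × Bool) →
    (ZMod (2*m+1) × Bool) × (ZMod (2*m+1) × Bool) → Prop :=
  fun p q => ((dihedral (2*m+1)).double).tensorStep p q ∨ q = (doubleRho p.1, doubleRho p.2)

/-- Full invariant characterizing the equivalence classes. -/
def Rel (m : ℕ) (p q : (ZMod (2*m+1) × Bool) × (ZMod (2*m+1) × Bool)) : Prop :=
  (q.2.1 - q.1.1 = p.2.1 - p.1.1 ∨ q.2.1 - q.1.1 = -(p.2.1 - p.1.1)) ∧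
  xor q.1.2 q.2.2 = xor p.1.2 p.2.2

lemma double_op (a b : ZMod (2*m+1) × Bool) :
    ((dihedral (2*m+1)).double).op a b = (2 * b.1 - a.1, a.2) := by
  show (if b.2 then _ else _, a.2) = _
  cases b.2 <;> rfl

lemma step_gen (p : (ZMod (2*m+1) × Bool) × (ZMod (2*m+1) × Bool)) (z : ZMod (2*m+1)) :
    Relation.EqvGen (R m) p ((2*z - p.1.1, p.1.2), (2*z - p.2.1, p.2.2)) := by
  refine Relation.EqvGen.rel _ _ (Or.inl ⟨(z, true), ?_⟩)
  rw [double_op, double_op]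

lemma two_mul_succ : ((2 * (m+1) : ℕ) : ZMod (2*m+1)) = 1 := by
  have : (2*(m+1) : ℕ) = (2*m+1) + 1 := by omega
  rw [this, Nat.cast_add, ZMod.natCast_self, Nat.cast_one, zero_add]

lemma translate_gen' (p : (ZMod (2*m+1) × Bool) × (ZMod (2*m+1) × Bool)) (t : ZMod (2*m+1)) :
    Relation.EqvGen (R m) p ((p.1.1 + t, p.1.2), (p.2.1 + t, p.2.2)) := by
  have h1 := step_gen p 0
  have h2 := step_gen ((2*0 - p.1.1, p.1.2), (2*0 - p.2.1, p.2.2)) (((m+1 : ℕ) : ZMod (2*m+1)) * t)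
  have key : (2:ZMod (2*m+1)) * (((m+1 : ℕ) : ZMod (2*m+1)) * t) = t := by
    have h := two_mul_succ (m := m)
    push_cast at h ⊢
    rw [← mul_assoc]
    rw [show (2:ZMod (2*m+1)) * ((m:ZMod (2*m+1))+1) = 2*(m:ZMod (2*m+1))+2 by ring] at *
    rw [show (2:ZMod (2*m+1)) * (m:ZMod (2*m+1)) + 2 = ((2*(m+1):ℕ) : ZMod (2*m+1)) by push_cast; ring]
    rw [two_mul_succ, one_mul]
  rw [key] at h2
  have : ((((m:ZMod (2*m+1)))*t), p.1.2) = ((((m:ZMod (2*m+1)))*t), p.1.2) := rfl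
  refine Relation.EqvGen.trans _ _ _ h1 ?_
  convert h2 using 3 <;> ring

lemma flip_gen (x y : ZMod (2*m+1)) (ε δ : Bool) :
    Relation.EqvGen (R m) ((x, ε), (y, δ)) ((x, ε), (2*x - y, δ)) := by
  have h := step_gen (m := m) ((x, ε), (y, δ)) x
  simpa [show 2*x - x = x by ring] using h

lemma rho_gen (p : (ZMod (2*m+1) × Bool) × (ZMod (2*m+1) × Bool)) :
    Relation.EqvGen (R m) p ((p.1.1, !p.1.2), (p.2.1, !p.2.2)) :=
  Relation.EqvGen.rel _ _ (Or.inr rfl)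

lemma rel_refl (p) : Rel m p p := ⟨Or.inl rfl, rfl⟩

lemma rel_symm {p q} (h : Rel m p q) : Rel m q p := by
  obtain ⟨h1 | h1, h2⟩ := h
  · exact ⟨Or.inl h1.symm, h2.symm⟩
  · exact ⟨Or.inr (by rw [h1]; ring), h2.symm⟩

lemma rel_trans {p q r} (h : Rel m p q) (h' : Rel m q r) : Rel m p r := by
  obtain ⟨h1 | h1, h2⟩ := h <;> obtain ⟨h1' | h1', h2'⟩ := h' <;>
    refine ⟨?_, h2'.trans h2⟩
  · exact Or.inl (h1'.trans h1)
  · exact Or.inr (by rw [h1', h1])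
  · exact Or.inr (by rw [h1', h1])
  · exact Or.inl (by rw [h1', h1]; ring)

lemma eqvGen_iff_rel (p q : (ZMod (2*m+1) × Bool) × (ZMod (2*m+1) × Bool)) :
    Relation.EqvGen (R m) p q ↔ Rel m p q := by
  constructor
  · intro h
    induction h with
    | rel a b hab =>
      rcases hab with ⟨z, hz⟩ | hz
      · rw [hz, double_op, double_op]
        exact ⟨Or.inr (by ring), rfl⟩
      · rw [hz]
        refine ⟨Or.inl rfl, ?_⟩
        show xor (!a.1.2) (!a.2.2) = _
        cases a.1.2 <;> cases a.2.2 <;> rfl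
    | refl a => exact rel_refl a
    | symm a b _ ih => exact rel_symm ih
    | trans a b c _ _ ih1 ih2 => exact rel_trans ih1 ih2
  · obtain ⟨⟨x, ε⟩, ⟨y, δ⟩⟩ := p
    obtain ⟨⟨u, α⟩, ⟨v, β⟩⟩ := q
    rintro ⟨h1, h2⟩
    simp only at h1 h2
    -- first fix the bools
    have hb : (α = ε ∧ β = δ) ∨ (α = !ε ∧ β = !δ) := by
      cases ε <;> cases δ <;> cases α <;> cases β <;> simp_all
    have hgeom : Relation.EqvGen (R m) ((x, ε), (y, δ)) ((u, ε), (v, δ)) := by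
      rcases h1 with h1 | h1
      · have h := translate_gen' (m := m) ((x, ε), (y, δ)) (u - x)
        simp only at h
        rw [show x + (u - x) = u by ring, show y + (u - x) = v by
          have : v = (v - u) + u := by ring
          rw [this, h1]; ring] at h
        exact h
      · have h := translate_gen' (m := m) ((x, ε), (y, δ)) (u - x)
        simp only at h
        rw [show x + (u - x) = u by ring] at h
        refine Relation.EqvGen.trans _ _ _ h ?_
        have h2' := flip_gen (m := m) u (y + (u - x)) ε δ
        rw [show 2*u - (y + (u - x)) = v by
          have : v = (v - u) + u := by ring
          rw [this, h1]; ring] at h2'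
        exact h2'
    rcases hb with ⟨ha, hb⟩ | ⟨ha, hb⟩
    · rw [ha, hb]; exact hgeom
    · rw [ha, hb]
      exact Relation.EqvGen.trans _ _ _ hgeom (rho_gen _)

lemma exists_k (d : ZMod (2*m+1)) :
    ∃ k ≤ m, d = (k : ZMod (2*m+1)) ∨ d = -(k : ZMod (2*m+1)) := by
  haveI : NeZero (2*m+1) := ⟨by omega⟩
  have hv : d.val < 2*m+1 := ZMod.val_lt d
  rcases le_or_gt d.val m with h | h
  · refine ⟨d.val, h, Or.inl ?_⟩
    rw [ZMod.natCast_val, ZMod.cast_id]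
  · refine ⟨2*m+1 - d.val, by omega, Or.inr ?_⟩
    rw [Nat.cast_sub hv.le, ZMod.natCast_self, ZMod.natCast_val, ZMod.cast_id]
    ring

lemma cast_eq_iff {k k' : ℕ} (hk : k ≤ m) (hk' : k' ≤ m)
    (h : (k : ZMod (2*m+1)) = (k' : ZMod (2*m+1)) ∨ (k : ZMod (2*m+1)) = -(k' : ZMod (2*m+1))) :
    k = k' := by
  haveI : NeZero (2*m+1) := ⟨by omega⟩
  rcases h with h | h
  · have := congrArg ZMod.val h
    rwa [ZMod.val_cast_of_lt (by omega), ZMod.val_cast_of_lt (by omega)] at this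
  · have h0 : ((k + k' : ℕ) : ZMod (2*m+1)) = 0 := by push_cast; rw [h]; ring
    have hd := (ZMod.natCast_eq_zero_iff _ _).mp h0
    rcases Nat.eq_zero_or_pos (k + k') with h' | h'
    · omega
    · have := Nat.le_of_dvd h' hd
      omega

lemma mem_Eset {n k : ℕ} (ε δ α β : Bool) (i j : ZMod n) :
    ((i, α), (j, β)) ∈ EsetD n k ε δ ↔ α = ε ∧ β = δ ∧ (j - i = (k : ZMod n) ∨ j - i = -(k : ZMod n)) := by
  simp only [EsetD, Set.mem_setOf_eq, Prod.mk.injEq]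
  constructor
  · rintro ⟨i', ⟨⟨hi, ha⟩, hj, hb⟩ | ⟨⟨hi, ha⟩, hj, hb⟩⟩
    · exact ⟨ha, hb, Or.inl (by rw [hj, hi]; ring)⟩
    · exact ⟨ha, hb, Or.inr (by rw [hj, hi]; ring)⟩
  · rintro ⟨ha, hb, h | h⟩
    · exact ⟨i, Or.inl ⟨⟨rfl, ha⟩, by linear_combination h, hb⟩⟩
    · exact ⟨i, Or.inr ⟨⟨rfl, ha⟩, by linear_combination h, hb⟩⟩

lemma class_eq (k : ℕ) (ε δ : Bool) (p : (ZMod (2*m+1) × Bool) × (ZMod (2*m+1) × Bool))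
    (hd : p.2.1 - p.1.1 = (k : ZMod (2*m+1)) ∨ p.2.1 - p.1.1 = -(k : ZMod (2*m+1)))
    (hb : xor p.1.2 p.2.2 = xor ε δ) :
    {q | Rel m p q} = EsetD (2*m+1) k ε δ ∪ EsetD (2*m+1) k (!ε) (!δ) := by
  ext ⟨⟨i, α⟩, ⟨j, β⟩⟩
  simp only [Set.mem_setOf_eq, Set.mem_union, mem_Eset]
  constructor
  · rintro ⟨h1, h2⟩
    have hd' : j - i = (k : ZMod (2*m+1)) ∨ j - i = -(k : ZMod (2*m+1)) := by
      rcases h1 with h1 | h1 <;> rcases hd with hd | hd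
      · exact Or.inl (h1.trans hd)
      · exact Or.inr (h1.trans hd)
      · exact Or.inr (by rw [h1, hd])
      · exact Or.inl (by rw [h1, hd]; try ring)
    simp only at h2
    have hb' : (α = ε ∧ β = δ) ∨ (α = !ε ∧ β = !δ) := by
      rw [hb] at h2
      cases ε <;> cases δ <;> cases α <;> cases β <;> simp_all
    rcases hb' with ⟨ha, hbb⟩ | ⟨ha, hbb⟩
    · exact Or.inl ⟨ha, hbb, hd'⟩
    · exact Or.inr ⟨ha, hbb, hd'⟩
  · have geom : (j - i = (k : ZMod (2*m+1)) ∨ j - i = -(k : ZMod (2*m+1))) →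
        (j - i = p.2.1 - p.1.1 ∨ j - i = -(p.2.1 - p.1.1)) := by
      rintro (h | h) <;> rcases hd with h' | h'
      · exact Or.inl (by rw [h, h'])
      · exact Or.inr (by rw [h, h']; try ring)
      · exact Or.inr (by rw [h, h'])
      · exact Or.inl (by rw [h, h']; try ring)
    rintro (⟨ha, hbb, hd'⟩ | ⟨ha, hbb, hd'⟩)
    · subst ha hbb
      exact ⟨geom hd', hb.symm⟩
    · subst ha hbb
      refine ⟨geom hd', ?_⟩
      rw [hb]
      cases ε <;> cases δ <;> rfl

lemma eqv_class_eq (p : (ZMod (2*m+1) × Bool) × (ZMod (2*m+1) × Bool)) :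
    {q | ((dihedral (2*m+1)).double).tensorRhoEqv doubleRho p q} = {q | Rel m p q} := by
  ext q
  exact eqvGen_iff_rel p q

end St12

/-- for `n = 2m+1`, the quotient `D(R_n) ⊗ D(R_n) / ⟨ρ⟩` has exactly
`2(m+1) = n+1` elements, namely `E(k)^{+,+} ∪ E(k)^{−,−}` and
`E(k)^{+,−} ∪ E(k)^{−,+}` for `k = 0, …, m`. -/
theorem statement12 (m : ℕ) :
    ({S : Set ((ZMod (2 * m + 1) × Bool) × (ZMod (2 * m + 1) × Bool)) |
        ∃ p, S = {q | ((dihedral (2 * m + 1)).double).tensorRhoEqv doubleRho p q}} =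
      {S | ∃ k ≤ m,
        S = EsetD (2 * m + 1) k true true ∪ EsetD (2 * m + 1) k false false ∨
        S = EsetD (2 * m + 1) k true false ∪ EsetD (2 * m + 1) k false true}) ∧
    Nat.card (((dihedral (2 * m + 1)).double).TensorRho doubleRho) = 2 * (m + 1) := by
  constructor
  · ext S
    simp only [Set.mem_setOf_eq]
    constructor
    · rintro ⟨p, rfl⟩
      obtain ⟨k, hk, hd⟩ := St12.exists_k (p.2.1 - p.1.1)
      refine ⟨k, hk, ?_⟩
      rw [show ((dihedral (2*m+1)).double).tensorRhoEqv doubleRho p = fun q => St12.Rel m p q from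
        funext fun q => propext (St12.eqvGen_iff_rel p q)]
      cases hxor : xor p.1.2 p.2.2
      · left
        have := St12.class_eq k true true p hd (by rw [hxor]; rfl)
        simpa using this
      · right
        have := St12.class_eq k true false p hd (by rw [hxor]; rfl)
        simpa using this
    · rintro ⟨k, hk, h | h⟩
      · refine ⟨((0, true), ((k : ZMod (2*m+1)), true)), ?_⟩
        rw [show ((dihedral (2*m+1)).double).tensorRhoEqv doubleRho
            (((0 : ZMod (2*m+1)), true), ((k : ZMod (2*m+1)), true)) = fun q =>
              St12.Rel m (((0 : ZMod (2*m+1)), true), ((k : ZMod (2*m+1)), true)) q from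
          funext fun q => propext (St12.eqvGen_iff_rel _ q), h]
        have := St12.class_eq (m := m) k true true (((0 : ZMod (2*m+1)), true),
          ((k : ZMod (2*m+1)), true)) (Or.inl (by simp)) rfl
        simp only [Bool.not_true] at this
        exact this.symm
      · refine ⟨((0, true), ((k : ZMod (2*m+1)), false)), ?_⟩
        rw [show ((dihedral (2*m+1)).double).tensorRhoEqv doubleRho
            (((0 : ZMod (2*m+1)), true), ((k : ZMod (2*m+1)), false)) = fun q =>
              St12.Rel m (((0 : ZMod (2*m+1)), true), ((k : ZMod (2*m+1)), false)) q from
          funext fun q => propext (St12.eqvGen_iff_rel _ q), h]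
        have := St12.class_eq (m := m) k true false (((0 : ZMod (2*m+1)), true),
          ((k : ZMod (2*m+1)), false)) (Or.inl (by simp)) rfl
        simp only [Bool.not_true, Bool.not_false] at this
        exact this.symm
  · have hbij : Function.Bijective (fun x : Fin (m+1) × Bool =>
        (Quotient.mk (Relation.EqvGen.setoid _)
          (((0 : ZMod (2*m+1)), true), (((x.1 : ℕ) : ZMod (2*m+1)), x.2)) :
          ((dihedral (2*m+1)).double).TensorRho doubleRho)) := by
      constructor
      · rintro ⟨k, b⟩ ⟨k', b'⟩ h
        have h2 : Relation.EqvGen (St12.R m)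
            (((0 : ZMod (2*m+1)), true), (((k : ℕ) : ZMod (2*m+1)), b))
            (((0 : ZMod (2*m+1)), true), (((k' : ℕ) : ZMod (2*m+1)), b')) :=
          Quotient.exact h
        rw [St12.eqvGen_iff_rel] at h2
        obtain ⟨h3, h4⟩ := h2
        simp only [sub_zero] at h3
        have hkk : (k' : ℕ) = (k : ℕ) :=
          St12.cast_eq_iff (by omega) (by omega) h3
        have hbb : b' = b := by
          simpa using h4
        simp only [Prod.mk.injEq]
        exact ⟨Fin.ext hkk.symm, hbb.symm⟩
      · intro q
        obtain ⟨p, rfl⟩ := Quotient.exists_rep q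
        obtain ⟨k, hk, hd⟩ := St12.exists_k (p.2.1 - p.1.1)
        refine ⟨(⟨k, by omega⟩, !(xor p.1.2 p.2.2)), ?_⟩
        refine Quotient.sound ?_
        show Relation.EqvGen (St12.R m) _ _
        rw [St12.eqvGen_iff_rel]
        refine ⟨?_, ?_⟩
        · simpa [sub_zero] using hd
        · show xor p.1.2 p.2.2 = xor true (!(xor p.1.2 p.2.2))
          cases p.1.2 <;> cases p.2.2 <;> rfl
    have h5 : Nat.card (((dihedral (2*m+1)).double).TensorRho doubleRho)
        = Nat.card (Fin (m+1) × Bool) :=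
      (Nat.card_eq_of_bijective _ hbij).symm
    rw [h5]
    simp only [Nat.card_eq_fintype_card, Fintype.card_prod, Fintype.card_fin, Fintype.card_bool]
    ring
end
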